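/- arXiv:1608.08474 — 5 statements merged into one kernel-verified Lean document; each statement's English description precedes it below -/
import Mathlib

section
/- Let 𝒜 and ℬ be finite sets with |𝒜| ≥ 2 and |ℬ| ≥ 2, and let p, q be pmfs on 𝒜 × ℬ with marginals p_B, q_B on ℬ. Set D₁ = √(2 ln 2) · √(D(q‖p)) and D₂ = √(2 ln 2) · √(D(q_B‖p_B)). If 0 < D₂ and D₁ ≤ 1/2 (note D₂ ≤ D₁), then H_q(A|B) − H_p(A|B) ≤ D₁ log₂( |𝒜||ℬ| / D₁ ) + D₂ log₂( |ℬ| / D₂ ), where H_r(A|B) = H(r) − H(r_B) denotes the base-2 conditional entropy under the joint pmf r. (Conditional-entropy continuity bound, steps (a)–(c) of Eq. (eqaaaa) in the proof of Lemma 2 of the paper.) -/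
open scoped ENNReal BigOperators

attribute [local instance] Classical.propDecidable

/-- Kullback–Leibler divergence (base 2) between two pmfs on a finite set,
valued in `[0, +∞]`. -/
noncomputable def klDiv {α : Type*} [Fintype α] (p q : α → ℝ) : ℝ≥0∞ :=
  if ∀ x, q x = 0 → p x = 0 then
    ENNReal.ofReal (∑ x, p x * Real.logb 2 (p x / q x))
  else ⊤

/-- A probability mass function on a finite set. -/
def IsPMF {α : Type*} [Fintype α] (p : α → ℝ) : Prop :=
  (∀ x, 0 ≤ p x) ∧ ∑ x, p x = 1

/-- Base-2 Shannon entropy of a pmf. -/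
noncomputable def shannonEntropy {α : Type*} [Fintype α] (p : α → ℝ) : ℝ :=
  -∑ x, p x * Real.logb 2 (p x)

/-- `ℬ`-marginal of a joint pmf on `𝒜 × ℬ`. -/
noncomputable def margB {𝒜 ℬ : Type*} [Fintype 𝒜] [Fintype ℬ]
    (p : 𝒜 × ℬ → ℝ) : ℬ → ℝ :=
  fun b => ∑ a, p (a, b)

/-- Conditional entropy `H_r(A|B) = H(r) − H(r_B)` of a joint pmf `r` on
`𝒜 × ℬ` (base-2). -/
noncomputable def condEntAB {𝒜 ℬ : Type*} [Fintype 𝒜] [Fintype ℬ]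
    (r : 𝒜 × ℬ → ℝ) : ℝ :=
  shannonEntropy r - shannonEntropy (margB r)

/-!
Finiteness of `D₁` forces `supp q ⊆ supp p`. Pinsker's inequality then gives
`‖q - p‖₁ ≤ D₁` and `‖q_B - p_B‖₁ ≤ D₂`, and the log-sum inequality (data processing for the
marginal) gives `D₂ ≤ D₁ ≤ 1/2`. For `η x = -x log x` and `|s - t| ≤ 1/2` one has
`|η s - η t| ≤ η |s - t|`; summing and bounding `∑ η` by the maximum entropy yields the
Fannes-type bound `|H q - H p| ≤ θ log₂ (d / θ)` with `θ = ‖q - p‖₁ ≤ 1/2`, and as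
`θ ↦ θ log₂ (d / θ)` is increasing on `[0, 1/2]` for `d ≥ 2`, `θ` may be replaced by `D₁`, resp.
`D₂`. Finally `H_q(A|B) - H_p(A|B) = (H q - H p) + (H p_B - H q_B)`.
-/

open Real Finset

lemma sub_le_mul_log_div {a b : ℝ} (ha : 0 ≤ a) (hb : 0 < b) : a - b ≤ a * log (a / b) := by
  rcases ha.eq_or_lt with rfl | ha
  · simpa using hb.le
  have h := one_sub_inv_le_log_of_pos (div_pos ha hb)
  calc a - b = a * (1 - (a / b)⁻¹) := by field_simp
    _ ≤ a * log (a / b) := by gcongr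

theorem sum_mul_log_div_sum_le {ι : Type*} (s : Finset ι) {a b : ι → ℝ}
    (ha : ∀ i ∈ s, 0 ≤ a i) (hb : ∀ i ∈ s, 0 ≤ b i) (hab : ∀ i ∈ s, b i = 0 → a i = 0) :
    (∑ i ∈ s, a i) * log ((∑ i ∈ s, a i) / ∑ i ∈ s, b i) ≤ ∑ i ∈ s, a i * log (a i / b i) := by
  set A := ∑ i ∈ s, a i
  set B := ∑ i ∈ s, b i
  rcases (sum_nonneg ha).eq_or_lt with hA | hA
  · have ha0 : ∀ i ∈ s, a i = 0 := (sum_eq_zero_iff_of_nonneg ha).mp hA.symm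
    rw [show A = 0 from hA.symm, zero_mul]
    exact (sum_eq_zero fun i hi => by simp [ha0 i hi]).ge
  have hB : 0 < B := by
    refine (sum_nonneg hb).lt_of_ne fun hB => hA.ne' ?_
    exact sum_eq_zero fun i hi => hab i hi ((sum_eq_zero_iff_of_nonneg hb).mp hB.symm i hi)
  set t := A / B
  have ht : 0 < t := div_pos hA hB
  -- tangent-line bound of `x ↦ x log x` at the ratio `t`, summed over `s`
  have tangent : ∀ i ∈ s, a i * log t + (a i - t * b i) ≤ a i * log (a i / b i) := by
    intro i hi
    rcases (ha i hi).eq_or_lt with h0 | hai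
    · simp [← h0, mul_nonneg ht.le (hb i hi)]
    have hbi : 0 < b i := (hb i hi).lt_of_ne fun h => hai.ne' (hab i hi h.symm)
    have h := sub_le_mul_log_div (ha i hi) (mul_pos ht hbi)
    rw [div_mul_eq_div_div_swap, log_div (by positivity) ht.ne'] at h
    linarith
  calc A * log t = ∑ i ∈ s, (a i * log t + (a i - t * b i)) := by
        rw [sum_add_distrib, sum_sub_distrib, ← sum_mul, ← mul_sum,
          div_mul_cancel₀ A hB.ne', sub_self, add_zero]
    _ ≤ _ := sum_le_sum tangent

lemma negMulLog_add_le {s t : ℝ} (hs : 0 ≤ s) (ht : 0 ≤ t) :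
    negMulLog (s + t) ≤ negMulLog s + negMulLog t := by
  rcases hs.eq_or_lt with rfl | hs
  · simp
  rcases ht.eq_or_lt with rfl | ht
  · simp
  have h₁ : log s ≤ log (s + t) := log_le_log hs (by linarith)
  have h₂ : log t ≤ log (s + t) := log_le_log ht (by linarith)
  simp only [negMulLog, neg_mul, add_mul]
  nlinarith

/-- Weighted AM–GM with weights `e / (1 - e)` and `(1 - 2e) / (1 - e)` at the points `e` and `1`
gives `e ^ (e / (1 - e)) ≤ 1 - e`. -/
lemma negMulLog_one_sub_le {e : ℝ} (he : 0 ≤ e) (he2 : e ≤ 1 / 2) :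
    negMulLog (1 - e) ≤ negMulLog e := by
  rcases he.eq_or_lt with rfl | he
  · simp
  have h1e : 0 < 1 - e := by linarith
  have amgm := geom_mean_le_arith_mean2_weighted (w₁ := e / (1 - e)) (w₂ := (1 - 2 * e) / (1 - e))
    (p₁ := e) (p₂ := 1) (by positivity) (div_nonneg (by linarith) h1e.le) he.le zero_le_one
    (by field_simp; ring)
  rw [one_rpow, mul_one, mul_one, div_mul_eq_mul_div,
    show e * e / (1 - e) + (1 - 2 * e) / (1 - e) = 1 - e by field_simp; ring] at amgm
  have hlog := log_le_log (by positivity) amgm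
  rw [log_rpow he, div_mul_eq_mul_div, div_le_iff₀ h1e] at hlog
  simp only [negMulLog, neg_mul, neg_le_neg_iff]
  linarith

lemma antitoneOn_negMulLog_add_sub {e : ℝ} (he : 0 ≤ e) :
    AntitoneOn (fun x => negMulLog (x + e) - negMulLog x) (Set.Ici 0) := by
  refine antitoneOn_of_hasDerivWithinAt_nonpos (convex_Ici 0) (by fun_prop)
    (f' := fun x => log x - log (x + e)) (fun x hx => ?_) (fun x hx => ?_)
  all_goals rw [interior_Ici] at hx
  · have hxe : x + e ≠ 0 := by have := Set.mem_Ioi.mp hx; positivity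
    have h := ((hasDerivAt_negMulLog hxe).comp x ((hasDerivAt_id x).add_const e)).sub
      (hasDerivAt_negMulLog (ne_of_gt hx))
    exact (h.congr_deriv (by simp; ring)).hasDerivWithinAt
  · exact sub_nonpos.mpr (log_le_log hx (by linarith))

lemma negMulLog_le_negMulLog_add_add {t e : ℝ} (ht : 0 ≤ t) (he : 0 ≤ e) (he2 : e ≤ 1 / 2)
    (hte : t + e ≤ 1) : negMulLog t ≤ negMulLog (t + e) + negMulLog e := by
  have h := antitoneOn_negMulLog_add_sub he (Set.mem_Ici.mpr ht)
    (Set.mem_Ici.mpr (by linarith : (0 : ℝ) ≤ 1 - e)) (by linarith)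
  simp only [sub_add_cancel, negMulLog_one] at h
  linarith [negMulLog_one_sub_le he he2]

lemma abs_negMulLog_sub_le {s t : ℝ} (hs : 0 ≤ s) (hs1 : s ≤ 1) (ht : 0 ≤ t) (ht1 : t ≤ 1)
    (hst : |s - t| ≤ 1 / 2) : |negMulLog s - negMulLog t| ≤ negMulLog |s - t| := by
  wlog hts : t ≤ s generalizing s t
  · rw [abs_sub_comm, abs_sub_comm s]
    exact this ht ht1 hs hs1 (by rwa [abs_sub_comm]) (by linarith)
  rw [abs_of_nonneg (sub_nonneg.mpr hts)] at hst ⊢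
  have hsub := negMulLog_add_le ht (sub_nonneg.mpr hts)
  have hrev := negMulLog_le_negMulLog_add_add ht (sub_nonneg.mpr hts) hst (by linarith)
  rw [add_sub_cancel] at hsub hrev
  exact abs_le.mpr ⟨by linarith, by linarith⟩

lemma sum_negMulLog_le {α : Type*} [Fintype α] {ε : α → ℝ} (hε : ∀ x, 0 ≤ ε x) :
    ∑ x, negMulLog (ε x) ≤ (∑ x, ε x) * log (Fintype.card α / ∑ x, ε x) := by
  have h := sum_mul_log_div_sum_le univ (a := ε) (b := fun _ => 1) (fun x _ => hε x)
    (fun _ _ => zero_le_one) (fun _ _ h => absurd h one_ne_zero)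
  simp only [div_one, sum_const, card_univ, nsmul_eq_mul, mul_one] at h
  rw [← inv_div, log_inv]
  simp only [negMulLog, neg_mul, sum_neg_distrib]
  linarith

lemma mul_log_div_le_mul_log_div {x y d : ℝ} (hx : 0 ≤ x) (hxy : x ≤ y) (hy : y ≤ 1 / 2)
    (hd : 2 ≤ d) : x * log (d / x) ≤ y * log (d / y) := by
  rcases (hx.trans hxy).eq_or_lt with rfl | hy0
  · simp [le_antisymm hxy hx]
  have h4 : 4 ≤ d / y := by rw [le_div_iff₀ hy0]; linarith
  have hlog : 1 ≤ log (d / y) := by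
    rw [le_log_iff_exp_le (by positivity)]
    linarith [exp_one_lt_d9]
  rcases hx.eq_or_lt with rfl | hx0
  · rw [zero_mul]
    exact mul_nonneg hy0.le (by linarith)
  have hsplit : log (d / x) = log (d / y) + log (y / x) := by
    rw [← log_mul (by positivity) (by positivity)]; field_simp
  have hyx : x * log (y / x) ≤ y - x := by
    have := log_le_sub_one_of_pos (div_pos hy0 hx0)
    calc x * log (y / x) ≤ x * (y / x - 1) := by gcongr
      _ = y - x := by field_simp
  rw [hsplit]
  nlinarith

lemma antitoneOn_binKL_sub_sq {a b : ℝ} (hb : 0 < b) (ha : a ≤ 1) :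
    AntitoneOn (fun x => -a * log x - (1 - a) * log (1 - x) - 2 * (a - x) ^ 2) (Set.Icc b a) := by
  refine antitoneOn_of_hasDerivWithinAt_nonpos (convex_Icc b a) ?_
    (f' := fun x => -a / x + (1 - a) / (1 - x) + 4 * (a - x)) (fun x hx => ?_) (fun x hx => ?_)
  · have hlog : ContinuousOn log (Set.Icc b a) :=
      continuousOn_log.mono fun x hx => (hb.trans_le hx.1).ne'
    have hlog1 : ContinuousOn (fun x => (1 - a) * log (1 - x)) (Set.Icc b a) := by
      rcases ha.eq_or_lt with rfl | ha
      · simp only [sub_self, zero_mul]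
        exact continuousOn_const
      · refine continuousOn_const.mul (continuousOn_log.comp (by fun_prop) fun x hx => ?_)
        simp only [Set.mem_compl_iff, Set.mem_singleton_iff]
        linarith [hx.2]
    exact ((continuousOn_const.mul hlog).sub hlog1).sub (by fun_prop)
  all_goals
    rw [interior_Icc] at hx
    have hx0 : 0 < x := hb.trans hx.1
    have hx1 : 0 < 1 - x := by linarith [hx.2]
  · have h := (((hasDerivAt_log hx0.ne').const_mul (-a)).sub
      ((((hasDerivAt_id x).const_sub 1).log hx1.ne').const_mul (1 - a))).sub
      ((((hasDerivAt_id x).const_sub a).pow 2).const_mul 2)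
    refine (h.congr_deriv ?_).hasDerivWithinAt
    simp only [id, Nat.cast_ofNat]
    field_simp
    ring
  · have h4 : 4 ≤ 1 / (x * (1 - x)) := by
      rw [le_div_iff₀ (by positivity)]
      nlinarith [sq_nonneg (2 * x - 1)]
    have hf' : -a / x + (1 - a) / (1 - x) + 4 * (a - x) = (a - x) * (4 - 1 / (x * (1 - x))) := by
      field_simp
      ring
    rw [hf']
    exact mul_nonpos_of_nonneg_of_nonpos (by linarith [hx.2]) (by linarith)

lemma two_mul_sq_sub_le_binKL {a b : ℝ} (hb : 0 ≤ b) (hba : b ≤ a) (ha : a ≤ 1)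
    (hab : b = 0 → a = 0) :
    2 * (a - b) ^ 2 ≤ a * log (a / b) + (1 - a) * log ((1 - a) / (1 - b)) := by
  rcases hb.eq_or_lt with rfl | hb
  · simp [hab rfl]
  have h := antitoneOn_binKL_sub_sq hb ha ⟨le_rfl, hba⟩ ⟨hba, le_rfl⟩ hba
  have h₁ : a * log (a / b) = a * log a - a * log b := by
    rw [log_div (hb.trans_le hba).ne' hb.ne']
    ring
  have h₂ : (1 - a) * log ((1 - a) / (1 - b)) = (1 - a) * log (1 - a) - (1 - a) * log (1 - b) := by
    rcases ha.eq_or_lt with rfl | ha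
    · simp
    · rw [log_div (by linarith) (by linarith)]
      ring
  simp only [sub_self, ne_eq, OfNat.ofNat_ne_zero, not_false_eq_true, zero_pow, mul_zero,
    sub_zero] at h
  linarith


section PMF

variable {α : Type*} [Fintype α] {p q : α → ℝ}

lemma IsPMF.le_one (hp : IsPMF p) (x : α) : p x ≤ 1 :=
  hp.2 ▸ single_le_sum (fun y _ => hp.1 y) (mem_univ x)

lemma shannonEntropy_eq_sum_negMulLog (p : α → ℝ) :
    shannonEntropy p = (∑ x, negMulLog (p x)) / log 2 := by
  simp only [shannonEntropy, negMulLog, logb, neg_mul, sum_neg_distrib, sum_div, mul_div_assoc,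
    neg_div]

lemma abs_shannonEntropy_sub_le (hp : IsPMF p) (hq : IsPMF q) (hcard : 2 ≤ (Fintype.card α : ℝ))
    {θ : ℝ} (hθ : ∑ x, |q x - p x| ≤ θ) (hθ2 : θ ≤ 1 / 2) :
    |shannonEntropy q - shannonEntropy p| ≤ θ * logb 2 (Fintype.card α / θ) := by
  have hε : ∀ x, |q x - p x| ≤ 1 / 2 := fun x =>
    (single_le_sum (fun y _ => abs_nonneg (q y - p y)) (mem_univ x)).trans (hθ.trans hθ2)
  have hnat : |∑ x, negMulLog (q x) - ∑ x, negMulLog (p x)| ≤ θ * log (Fintype.card α / θ) :=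
    calc _ = |∑ x, (negMulLog (q x) - negMulLog (p x))| := by rw [sum_sub_distrib]
      _ ≤ ∑ x, |negMulLog (q x) - negMulLog (p x)| := abs_sum_le_sum_abs _ _
      _ ≤ ∑ x, negMulLog |q x - p x| := sum_le_sum fun x _ =>
          abs_negMulLog_sub_le (hq.1 x) (hq.le_one x) (hp.1 x) (hp.le_one x) (hε x)
      _ ≤ (∑ x, |q x - p x|) * log (Fintype.card α / ∑ x, |q x - p x|) :=
          sum_negMulLog_le fun x => abs_nonneg _
      _ ≤ θ * log (Fintype.card α / θ) :=
          mul_log_div_le_mul_log_div (sum_nonneg fun x _ => abs_nonneg _) hθ hθ2 hcard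
  have hlog2 : 0 < log 2 := log_pos one_lt_two
  rw [shannonEntropy_eq_sum_negMulLog, shannonEntropy_eq_sum_negMulLog, ← sub_div, abs_div,
    abs_of_pos hlog2, logb, ← mul_div_assoc]
  exact div_le_div_of_nonneg_right hnat hlog2.le

noncomputable def natKL (q p : α → ℝ) : ℝ :=
  ∑ x, q x * log (q x / p x)

lemma natKL_nonneg (hp : IsPMF p) (hq : IsPMF q) (h : ∀ x, p x = 0 → q x = 0) :
    0 ≤ natKL q p := by
  have := sum_mul_log_div_sum_le univ (fun x _ => hq.1 x) (fun x _ => hp.1 x) (fun x _ => h x)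
  rwa [hq.2, hp.2, div_one, log_one, mul_zero] at this

lemma klDiv_eq_ofReal_natKL (h : ∀ x, p x = 0 → q x = 0) :
    klDiv q p = ENNReal.ofReal (natKL q p / log 2) := by
  simp only [klDiv, if_pos h, natKL, sum_div, logb, mul_div_assoc]

lemma abs_cont_of_sqrt_mul_klDiv_rpow_ne_top
    (h : ENNReal.ofReal √(2 * log 2) * klDiv q p ^ (1 / 2 : ℝ) ≠ ⊤) :
    ∀ x, p x = 0 → q x = 0 := by
  by_contra hpq
  have hc : ENNReal.ofReal √(2 * log 2) ≠ 0 :=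
    (ENNReal.ofReal_pos.mpr (sqrt_pos.mpr (mul_pos two_pos (log_pos one_lt_two)))).ne'
  rw [klDiv, if_neg hpq, ENNReal.top_rpow_of_pos (by norm_num), ENNReal.mul_top hc] at h
  exact h rfl

lemma sqrt_mul_klDiv_rpow_eq (hp : IsPMF p) (hq : IsPMF q) (h : ∀ x, p x = 0 → q x = 0) :
    ENNReal.ofReal √(2 * log 2) * klDiv q p ^ (1 / 2 : ℝ) = ENNReal.ofReal √(2 * natKL q p) := by
  have hlog2 : 0 < log 2 := log_pos one_lt_two
  rw [klDiv_eq_ofReal_natKL h, ENNReal.ofReal_rpow_of_nonneg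
      (div_nonneg (natKL_nonneg hp hq h) hlog2.le) (by norm_num), ← sqrt_eq_rpow,
    ← ENNReal.ofReal_mul (sqrt_nonneg _), ← sqrt_mul (by positivity)]
  congr 2
  field_simp

/-- Pinsker's inequality, reduced to the two-point case by the log-sum inequality on
`{x | p x ≤ q x}` and its complement. -/
theorem sq_sum_abs_sub_le_two_mul_natKL (hp : IsPMF p) (hq : IsPMF q)
    (h : ∀ x, p x = 0 → q x = 0) : (∑ x, |q x - p x|) ^ 2 ≤ 2 * natKL q p := by
  set S := univ.filter fun x => p x ≤ q x
  set a := ∑ x ∈ S, q x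
  set b := ∑ x ∈ S, p x
  have hqc : ∑ x ∈ Sᶜ, q x = 1 - a := by linarith [sum_add_sum_compl S q, hq.2]
  have hpc : ∑ x ∈ Sᶜ, p x = 1 - b := by linarith [sum_add_sum_compl S p, hp.2]
  have hS : ∀ x ∈ S, |q x - p x| = q x - p x := fun x hx =>
    abs_of_nonneg (sub_nonneg.mpr (mem_filter.mp hx).2)
  have hSc : ∀ x ∈ Sᶜ, |q x - p x| = p x - q x := fun x hx => by
    rw [abs_sub_comm]
    exact abs_of_pos (sub_pos.mpr (not_le.mp (by simpa [S] using hx)))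
  have hl1 : ∑ x, |q x - p x| = 2 * (a - b) := by
    rw [← sum_add_sum_compl S, sum_congr rfl hS, sum_congr rfl hSc, sum_sub_distrib,
      sum_sub_distrib, hqc, hpc]
    ring
  have hkl : a * log (a / b) + (1 - a) * log ((1 - a) / (1 - b)) ≤ natKL q p := by
    rw [natKL, ← sum_add_sum_compl S, ← hqc, ← hpc]
    exact add_le_add
      (sum_mul_log_div_sum_le S (fun x _ => hq.1 x) (fun x _ => hp.1 x) (fun x _ => h x))
      (sum_mul_log_div_sum_le Sᶜ (fun x _ => hq.1 x) (fun x _ => hp.1 x) (fun x _ => h x))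
  have hba : b ≤ a := sum_le_sum fun x hx => (mem_filter.mp hx).2
  have ha1 : a ≤ 1 := by linarith [sum_nonneg fun x (_ : x ∈ Sᶜ) => hq.1 x]
  have hab : b = 0 → a = 0 := fun hb => sum_eq_zero fun x hx =>
    h x ((sum_eq_zero_iff_of_nonneg fun y _ => hp.1 y).mp hb x hx)
  have hbin := two_mul_sq_sub_le_binKL (sum_nonneg fun x _ => hp.1 x) hba ha1 hab
  rw [hl1]
  linarith

end PMF

section Marginal

variable {𝒜 ℬ : Type*} [Fintype 𝒜] [Fintype ℬ] {p q : 𝒜 × ℬ → ℝ}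

lemma IsPMF.margB (hp : IsPMF p) : IsPMF (margB p) :=
  ⟨fun b => sum_nonneg fun a _ => hp.1 (a, b), by rw [← hp.2, Fintype.sum_prod_type_right]; rfl⟩

lemma margB_abs_cont (hp : IsPMF p) (h : ∀ x, p x = 0 → q x = 0) :
    ∀ b, margB p b = 0 → margB q b = 0 := fun b hb =>
  sum_eq_zero fun a _ => h (a, b) ((sum_eq_zero_iff_of_nonneg fun a _ => hp.1 (a, b)).mp hb a
    (mem_univ a))

lemma natKL_margB_le (hp : IsPMF p) (hq : IsPMF q) (h : ∀ x, p x = 0 → q x = 0) :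
    natKL (margB q) (margB p) ≤ natKL q p := by
  rw [natKL, natKL, Fintype.sum_prod_type_right]
  exact sum_le_sum fun b _ => sum_mul_log_div_sum_le univ (fun a _ => hq.1 (a, b))
    (fun a _ => hp.1 (a, b)) (fun a _ => h (a, b))

end Marginal

theorem condEnt_diff_le_general
    {𝒜 ℬ : Type*} [Fintype 𝒜] [Fintype ℬ]
    (hA : 2 ≤ Fintype.card 𝒜) (hB : 2 ≤ Fintype.card ℬ)
    (p q : 𝒜 × ℬ → ℝ) (hp : IsPMF p) (hq : IsPMF q)
    (D₁ D₂ : ℝ≥0∞)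
    (hD₁ : D₁ = ENNReal.ofReal (Real.sqrt (2 * Real.log 2)) *
      (klDiv q p) ^ (1 / 2 : ℝ))
    (hD₂ : D₂ = ENNReal.ofReal (Real.sqrt (2 * Real.log 2)) *
      (klDiv (margB q) (margB p)) ^ (1 / 2 : ℝ))
    (hD₁half : D₁ ≤ ENNReal.ofReal (1 / 2)) :
    condEntAB q - condEntAB p ≤
      D₁.toReal * Real.logb 2
          ((Fintype.card 𝒜 : ℝ) * (Fintype.card ℬ : ℝ) / D₁.toReal) +
        D₂.toReal * Real.logb 2 ((Fintype.card ℬ : ℝ) / D₂.toReal) := by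
  have hac : ∀ x, p x = 0 → q x = 0 :=
    abs_cont_of_sqrt_mul_klDiv_rpow_ne_top
      (hD₁ ▸ ne_top_of_le_ne_top ENNReal.ofReal_ne_top hD₁half)
  have hacB := margB_abs_cont hp hac
  rw [sqrt_mul_klDiv_rpow_eq hp hq hac] at hD₁
  rw [sqrt_mul_klDiv_rpow_eq hp.margB hq.margB hacB] at hD₂
  subst hD₁ hD₂
  rw [ENNReal.ofReal_le_ofReal_iff (by norm_num)] at hD₁half
  rw [ENNReal.toReal_ofReal (sqrt_nonneg _), ENNReal.toReal_ofReal (sqrt_nonneg _)]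
  have hD₂₁ : √(2 * natKL (margB q) (margB p)) ≤ √(2 * natKL q p) :=
    sqrt_le_sqrt (by linarith [natKL_margB_le hp hq hac])
  have hdA : (2 : ℝ) ≤ Fintype.card 𝒜 := by exact_mod_cast hA
  have hdB : (2 : ℝ) ≤ Fintype.card ℬ := by exact_mod_cast hB
  have hjoint := abs_shannonEntropy_sub_le hp hq
    (by rw [Fintype.card_prod, Nat.cast_mul]; nlinarith)
    (le_sqrt_of_sq_le (sq_sum_abs_sub_le_two_mul_natKL hp hq hac)) hD₁half
  have hmarg := abs_shannonEntropy_sub_le hp.margB hq.margB hdB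
    (le_sqrt_of_sq_le (sq_sum_abs_sub_le_two_mul_natKL hp.margB hq.margB hacB))
    (hD₂₁.trans hD₁half)
  rw [Fintype.card_prod, Nat.cast_mul] at hjoint
  rw [abs_sub_comm] at hmarg
  simp only [condEntAB]
  linarith [le_abs_self (shannonEntropy q - shannonEntropy p),
    le_abs_self (shannonEntropy (margB p) - shannonEntropy (margB q))]

/-- Conditional-entropy continuity bound, steps (a)–(c) of Eq. (eqaaaa) in the
proof of Lemma 2: with `D₁ = √(2 ln 2)·√(D(q‖p))` and
`D₂ = √(2 ln 2)·√(D(q_B‖p_B))` (in `[0,+∞]`), if `0 < D₂` and `D₁ ≤ 1/2`, then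
`H_q(A|B) − H_p(A|B) ≤ D₁ log₂(|𝒜||ℬ|/D₁) + D₂ log₂(|ℬ|/D₂)`. -/
theorem condEnt_diff_le
    {𝒜 ℬ : Type*} [Fintype 𝒜] [Fintype ℬ]
    (hA : 2 ≤ Fintype.card 𝒜) (hB : 2 ≤ Fintype.card ℬ)
    (p q : 𝒜 × ℬ → ℝ) (hp : IsPMF p) (hq : IsPMF q)
    (D₁ D₂ : ℝ≥0∞)
    (hD₁ : D₁ = ENNReal.ofReal (Real.sqrt (2 * Real.log 2)) *
      (klDiv q p) ^ (1 / 2 : ℝ))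
    (hD₂ : D₂ = ENNReal.ofReal (Real.sqrt (2 * Real.log 2)) *
      (klDiv (margB q) (margB p)) ^ (1 / 2 : ℝ))
    (hD₂0 : 0 < D₂) (hD₁half : D₁ ≤ ENNReal.ofReal (1 / 2)) :
    condEntAB q - condEntAB p ≤
      D₁.toReal * Real.logb 2
          ((Fintype.card 𝒜 : ℝ) * (Fintype.card ℬ : ℝ) / D₁.toReal) +
        D₂.toReal * Real.logb 2 ((Fintype.card ℬ : ℝ) / D₂.toReal) :=
  condEnt_diff_le_general hA hB p q hp hq D₁ D₂ hD₁ hD₂ hD₁half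
end

section
/- Let C, Y₁, …, Y_k be random variables taking values in finite nonempty sets with joint pmf p, and suppose that for every i ∈ {3, …, k} the variables Y_{1:i−2} and Y_i are conditionally independent given (C, Y_{i−1}) (i.e., the joint pmf factorizes accordingly). Then D( p_{Y_{1:k}} ‖ ∏_{i=1}^{k} p_{Y_i} ) ≤ ∑_{i=2}^{k} I( Y_i ; (Y_{i−1}, C) ). (Abstract form of Lemma 3 of the paper, establishing asymptotic independence across blocks from pairwise bounds.) -/
open scoped ENNReal BigOperators

attribute [local instance] Classical.propDecidable

/-- Pushforward (marginal/distribution of a function of the random variable)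
of a pmf along a map. -/
noncomputable def pushforward {Ω β : Type*} [Fintype Ω] [DecidableEq β]
    (p : Ω → ℝ) (f : Ω → β) : β → ℝ :=
  fun b => ∑ ω, if f ω = b then p ω else 0

/-- The index `i − 1` in `Fin k` (meaningful when `1 ≤ (i : ℕ)`). -/
def prevIdx {k : ℕ} (i : Fin k) : Fin k :=
  ⟨(i : ℕ) - 1, Nat.lt_of_le_of_lt (Nat.sub_le _ _) i.isLt⟩

/-!
Under `p`, the mutual informations and the divergence are expectations of pointwise log-ratios.
The Markov property `p(c, y_{≤ i}) p(c, y_{i-1}) = p(c, y_{< i}) p(y_i, c, y_{i-1})` makes the sum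
of the pointwise mutual informations telescope to
`log p(c, y) - log p(c, y_0) - ∑_{i ≥ 1} log p(y_i)`, so the right-hand side minus the left-hand
side is the conditional mutual information `I(C ; Y | Y_0)`, which is nonnegative by Gibbs'
inequality.
-/

open Finset Real

section Pushforward

variable {Ω α β : Type*} [Fintype Ω] [DecidableEq α] [DecidableEq β] {p : Ω → ℝ}

lemma pushforward_nonneg (hp : ∀ ω, 0 ≤ p ω) (f : Ω → α) (a : α) :
    0 ≤ pushforward p f a :=
  sum_nonneg fun ω _ => by split_ifs <;> simp [hp ω]

lemma le_pushforward_apply (hp : ∀ ω, 0 ≤ p ω) (f : Ω → α) (ω : Ω) :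
    p ω ≤ pushforward p f (f ω) := by
  simpa [pushforward] using single_le_sum (f := fun ω' => if f ω' = f ω then p ω' else 0)
    (fun ω' _ => by split_ifs <;> simp [hp ω']) (mem_univ ω)

lemma pushforward_apply_pos (hp : ∀ ω, 0 ≤ p ω) (f : Ω → α) {ω : Ω} (hω : 0 < p ω) :
    0 < pushforward p f (f ω) :=
  hω.trans_le (le_pushforward_apply hp f ω)

lemma pushforward_apply_congr {f : Ω → α} {g : Ω → β} {ω : Ω}
    (h : ∀ ω', f ω' = f ω ↔ g ω' = g ω) : pushforward p f (f ω) = pushforward p g (g ω) :=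
  sum_congr rfl fun ω' _ => if_congr (h ω') rfl rfl

lemma sum_pushforward_mul [Fintype α] (p : Ω → ℝ) (f : Ω → α) (L : α → ℝ) :
    ∑ a, pushforward p f a * L a = ∑ ω, p ω * L (f ω) := by
  simp_rw [pushforward, sum_mul, ite_mul, zero_mul]
  rw [sum_comm]
  simp

lemma sum_pushforward [Fintype α] (p : Ω → ℝ) (f : Ω → α) :
    ∑ a, pushforward p f a = ∑ ω, p ω := by
  simpa using sum_pushforward_mul p f 1

lemma sum_pushforward_prodMk [Fintype α] (p : Ω → ℝ) (g : Ω → α) (f : Ω → β) (b : β) :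
    ∑ a, pushforward p (fun ω => (g ω, f ω)) (a, b) = pushforward p f b := by
  simp_rw [pushforward, Prod.ext_iff, ite_and]
  rw [sum_comm]
  simp

lemma shannonEntropy_pushforward [Fintype α] (p : Ω → ℝ) (f : Ω → α) :
    shannonEntropy (pushforward p f) = -∑ ω, p ω * logb 2 (pushforward p f (f ω)) := by
  rw [shannonEntropy, sum_pushforward_mul p f fun a => logb 2 (pushforward p f a)]

end Pushforward

lemma sum_mul_logb_div_nonneg {α : Type*} [Fintype α] {p q : α → ℝ} (hp : ∀ a, 0 ≤ p a)
    (hq : ∀ a, 0 ≤ q a) (hpq : ∀ a, 0 < p a → 0 < q a) (hsum : ∑ a, q a ≤ ∑ a, p a) :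
    0 ≤ ∑ a, p a * logb 2 (p a / q a) := by
  have hlog2 : 0 < log 2 := log_pos one_lt_two
  have hterm : ∀ a, (p a - q a) / log 2 ≤ p a * logb 2 (p a / q a) := by
    intro a
    rcases (hp a).eq_or_lt with ha | ha
    · simpa [← ha, neg_div] using div_nonneg (hq a) hlog2.le
    have h := one_sub_inv_le_log_of_pos (div_pos ha (hpq a ha))
    rw [inv_div, ← mul_le_mul_iff_of_pos_left ha, mul_sub, mul_one, mul_div_cancel₀ _ ha.ne'] at h
    rw [logb, ← mul_div_assoc]
    exact div_le_div_of_nonneg_right h hlog2.le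
  calc 0 ≤ (∑ a, p a - ∑ a, q a) / log 2 := div_nonneg (sub_nonneg.2 hsum) hlog2.le
    _ = ∑ a, (p a - q a) / log 2 := by rw [← sum_sub_distrib, sum_div]
    _ ≤ _ := sum_le_sum fun a _ => hterm a

section Information

variable {Ω α β : Type*} [Fintype Ω] [Fintype α] [Fintype β] [DecidableEq α] [DecidableEq β]
  {p : Ω → ℝ}

noncomputable def mutualInfo (p : Ω → ℝ) (f : Ω → α) (g : Ω → β) : ℝ :=
  shannonEntropy (pushforward p f) + shannonEntropy (pushforward p g) -
    shannonEntropy (pushforward p fun ω => (f ω, g ω))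

lemma mutualInfo_eq_sum (hp : ∀ ω, 0 ≤ p ω) (f : Ω → α) (g : Ω → β) :
    mutualInfo p f g = ∑ ω, p ω * logb 2 (pushforward p (fun ω => (f ω, g ω)) (f ω, g ω) /
      (pushforward p f (f ω) * pushforward p g (g ω))) := by
  simp only [mutualInfo, shannonEntropy_pushforward, ← sum_sub_distrib, ← sum_neg_distrib,
    ← sum_add_distrib]
  refine sum_congr rfl fun ω _ => ?_
  rcases (hp ω).eq_or_lt with hω | hω
  · simp [← hω]
  rw [logb_div (pushforward_apply_pos hp _ hω).ne'
      (mul_pos (pushforward_apply_pos hp f hω) (pushforward_apply_pos hp g hω)).ne',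
    logb_mul (pushforward_apply_pos hp f hω).ne' (pushforward_apply_pos hp g hω).ne']
  ring

lemma klDiv_pushforward {q : α → ℝ} (hp : ∀ ω, 0 ≤ p ω) (f : Ω → α)
    (hq : ∀ ω, 0 < p ω → 0 < q (f ω)) :
    klDiv (pushforward p f) q =
      ENNReal.ofReal (∑ ω, p ω * logb 2 (pushforward p f (f ω) / q (f ω))) := by
  have hac : ∀ a, q a = 0 → pushforward p f a = 0 := by
    refine fun a ha => sum_eq_zero fun ω _ => ?_
    split_ifs with hfω
    · by_contra hω
      exact (hq ω ((hp ω).lt_of_ne' hω)).ne' (hfω ▸ ha)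
    · rfl
  rw [klDiv, if_pos hac, sum_pushforward_mul p f fun a => logb 2 (pushforward p f a / q a)]

end Information

section CondIndepLaw

variable {γ α δ : Type*} [Fintype γ] [Fintype α] [DecidableEq γ] [DecidableEq α] [DecidableEq δ]

/-- `p(c | h y) p(y)`, with value `0` where `p(h y) = 0`. The divergence of `p` from it is
`I(C ; Y | h Y)`. -/
noncomputable def condIndepLaw (p : γ × α → ℝ) (h : α → δ) (ω : γ × α) : ℝ :=
  pushforward p (fun ω => (ω.1, h ω.2)) (ω.1, h ω.2) * pushforward p Prod.snd ω.2 /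
    pushforward p (fun ω => h ω.2) (h ω.2)

variable {p : γ × α → ℝ} (h : α → δ)

lemma condIndepLaw_nonneg (hp : ∀ ω, 0 ≤ p ω) (ω : γ × α) : 0 ≤ condIndepLaw p h ω :=
  div_nonneg (mul_nonneg (pushforward_nonneg hp _ _) (pushforward_nonneg hp _ _))
    (pushforward_nonneg hp _ _)

lemma condIndepLaw_pos (hp : ∀ ω, 0 ≤ p ω) {ω : γ × α} (hω : 0 < p ω) :
    0 < condIndepLaw p h ω :=
  div_pos (mul_pos (pushforward_apply_pos hp (fun ω => (ω.1, h ω.2)) hω)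
    (pushforward_apply_pos hp Prod.snd hω)) (pushforward_apply_pos hp (fun ω => h ω.2) hω)

lemma sum_condIndepLaw_le (hp : ∀ ω, 0 ≤ p ω) : ∑ ω, condIndepLaw p h ω ≤ ∑ ω, p ω := by
  rw [Fintype.sum_prod_type_right, ← sum_pushforward p Prod.snd]
  refine sum_le_sum fun y _ => ?_
  simp only [condIndepLaw, ← sum_div, ← sum_mul,
    sum_pushforward_prodMk p Prod.fst (fun ω => h ω.2)]
  rcases (pushforward_nonneg hp (fun ω => h ω.2) (h y)).eq_or_lt with h0 | hpos
  · simpa [← h0] using pushforward_nonneg hp Prod.snd y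
  · rw [mul_div_cancel_left₀ _ hpos.ne']

end CondIndepLaw

lemma forall_val_le_iff {K : ℕ} (m : Fin K) (P : Fin K → Prop) :
    (∀ j : Fin K, (j : ℕ) ≤ m → P j) ↔ (∀ j : Fin K, (j : ℕ) < m → P j) ∧ P m := by
  refine ⟨fun h => ⟨fun j hj => h j hj.le, h m le_rfl⟩, fun ⟨h, hm⟩ j hj => ?_⟩
  rcases hj.lt_or_eq with hlt | heq
  · exact h j hlt
  · rwa [Fin.ext heq]

section Chain

variable {k : ℕ} {γ : Type*} {β : Fin k → Type*} [Fintype γ] [∀ i, Fintype (β i)]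
  [DecidableEq γ] [∀ i, DecidableEq (β i)]

def IsCondMarkovChain (p : γ × ((i : Fin k) → β i) → ℝ) : Prop :=
  ∀ i : Fin k, 2 ≤ (i : ℕ) →
    ∀ (a : (j : {j : Fin k // (j : ℕ) < (i : ℕ) - 1}) → β j) (b : β i) (c : γ × β (prevIdx i)),
      pushforward p
          (fun ω => ((fun j : {j : Fin k // (j : ℕ) < (i : ℕ) - 1} => ω.2 j),
            ω.2 i, (ω.1, ω.2 (prevIdx i)))) (a, b, c) *
        pushforward p (fun ω => (ω.1, ω.2 (prevIdx i))) c =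
      pushforward p
          (fun ω => ((fun j : {j : Fin k // (j : ℕ) < (i : ℕ) - 1} => ω.2 j),
            (ω.1, ω.2 (prevIdx i)))) (a, c) *
        pushforward p (fun ω => (ω.2 i, (ω.1, ω.2 (prevIdx i)))) (b, c)

/-- The probability that `(C, (Y_j)_{j ∈ s})` takes the value it has at `ω`. -/
noncomputable def margAt (p : γ × ((i : Fin k) → β i) → ℝ) (s : Set (Fin k))
    (ω : γ × ((i : Fin k) → β i)) : ℝ :=
  pushforward p (fun ω' => (ω'.1, fun j : s => ω'.2 j)) (ω.1, fun j : s => ω.2 j)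

variable {p : γ × ((i : Fin k) → β i) → ℝ}

lemma pushforward_eq_margAt {δ : Type*} [DecidableEq δ] {f : γ × ((i : Fin k) → β i) → δ}
    {s : Set (Fin k)} {ω : γ × ((i : Fin k) → β i)}
    (hf : ∀ ω', f ω' = f ω ↔ ω'.1 = ω.1 ∧ ∀ j ∈ s, ω'.2 j = ω.2 j) :
    pushforward p f (f ω) = margAt p s ω :=
  pushforward_apply_congr fun ω' => (hf ω').trans (by simp [Prod.ext_iff, funext_iff])

lemma margAt_univ (ω : γ × ((i : Fin k) → β i)) : margAt p Set.univ ω = p ω := by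
  rw [← pushforward_eq_margAt (f := id) (by simp [Prod.ext_iff, funext_iff])]
  simp [pushforward]

lemma margAt_pos (hp : ∀ ω, 0 ≤ p ω) (s : Set (Fin k)) {ω : γ × ((i : Fin k) → β i)}
    (hω : 0 < p ω) : 0 < margAt p s ω :=
  pushforward_apply_pos hp _ hω

end Chain

section MarkovStep

variable {n : ℕ} {γ : Type*} {β : Fin (n + 1) → Type*} [Fintype γ] [∀ i, Fintype (β i)]
  [DecidableEq γ] [∀ i, DecidableEq (β i)] {p : γ × ((i : Fin (n + 1)) → β i) → ℝ}

lemma prevIdx_succ (i : Fin n) : prevIdx i.succ = i.castSucc :=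
  Fin.ext (by simp [prevIdx])

lemma margAt_step (hM : IsCondMarkovChain p) (i : Fin n) (ω : γ × ((i : Fin (n + 1)) → β i)) :
    margAt p {j | (j : ℕ) ≤ i + 1} ω * margAt p {i.castSucc} ω =
      margAt p {j | (j : ℕ) ≤ i} ω * margAt p {i.castSucc, i.succ} ω := by
  rcases Nat.eq_zero_or_pos i with hi | hi
  · have h0 : {j : Fin (n + 1) | (j : ℕ) ≤ i} = {i.castSucc} := by
      ext j
      simp only [Set.mem_ofPred_eq, Set.mem_singleton_iff, Fin.ext_iff, Fin.val_castSucc]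
      omega
    have h1 : {j : Fin (n + 1) | (j : ℕ) ≤ i + 1} = {i.castSucc, i.succ} := by
      ext j
      simp only [Set.mem_ofPred_eq, Set.mem_singleton_iff, Set.mem_insert_iff, Fin.ext_iff,
        Fin.val_castSucc, Fin.val_succ]
      omega
    rw [h0, h1, mul_comm]
  have hM' := hM i.succ (by simp; omega) (fun j => ω.2 j) (ω.2 i.succ) (ω.1, ω.2 (prevIdx i.succ))
  -- the four marginals in the Markov identity at `i + 1` are those of `C` together with
  -- `Y_{≤ i+1}`, `Y_i`, `Y_{≤ i}` and `(Y_i, Y_{i+1})`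
  rw [pushforward_eq_margAt, pushforward_eq_margAt, pushforward_eq_margAt,
    pushforward_eq_margAt] at hM'
  · exact hM'
  all_goals
    intro ω'
    have h1 := forall_val_le_iff i.succ fun j => ω'.2 j = ω.2 j
    have h2 := forall_val_le_iff i.castSucc fun j => ω'.2 j = ω.2 j
    simp only [Fin.val_succ, Fin.val_castSucc, Nat.lt_succ_iff] at h1 h2
    simp only [Prod.ext_iff, funext_iff, Subtype.forall, Fin.val_succ, Nat.add_sub_cancel,
      Set.mem_ofPred_eq, Set.mem_insert_iff, Set.mem_singleton_iff, forall_eq_or_imp, forall_eq,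
      h1, h2]
    rw [prevIdx_succ] <;> tauto

lemma sum_logb_margAt_div (hM : IsCondMarkovChain p) (hp : ∀ ω, 0 ≤ p ω)
    {ω : γ × ((i : Fin (n + 1)) → β i)} (hω : 0 < p ω) :
    ∑ i : Fin n, logb 2 (margAt p {i.castSucc, i.succ} ω / margAt p {i.castSucc} ω) =
      logb 2 (p ω) - logb 2 (margAt p {0} ω) := by
  set L : ℕ → ℝ := fun m => logb 2 (margAt p {j | (j : ℕ) ≤ m} ω)
  have hstep : ∀ i : Fin n,
      logb 2 (margAt p {i.castSucc, i.succ} ω / margAt p {i.castSucc} ω) = L (i + 1) - L i := by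
    intro i
    simp only [L]
    rw [← logb_div (margAt_pos hp _ hω).ne' (margAt_pos hp _ hω).ne']
    congr 1
    rw [div_eq_div_iff (margAt_pos hp _ hω).ne' (margAt_pos hp _ hω).ne', mul_comm]
    exact (margAt_step hM i ω).symm
  have hfirst : {j : Fin (n + 1) | (j : ℕ) ≤ 0} = {0} := by
    ext j
    simp only [Set.mem_ofPred_eq, Set.mem_singleton_iff, Fin.ext_iff, Fin.val_zero, Nat.le_zero]
  have hlast : {j : Fin (n + 1) | (j : ℕ) ≤ n} = Set.univ :=
    Set.eq_univ_of_forall fun j => Nat.lt_succ_iff.1 j.isLt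
  rw [sum_congr rfl fun i _ => hstep i, Fin.sum_univ_eq_sum_range (fun m => L (m + 1) - L m),
    sum_range_sub]
  simp only [L, hfirst, hlast, margAt_univ]

lemma sum_logb_pmi_sub_logb_div_prod (hM : IsCondMarkovChain p) (hp : ∀ ω, 0 ≤ p ω)
    {ω : γ × ((i : Fin (n + 1)) → β i)} (hω : 0 < p ω) :
    ∑ i : Fin n, logb 2
        (pushforward p (fun ω => (ω.2 i.succ, (ω.2 (prevIdx i.succ), ω.1)))
            (ω.2 i.succ, (ω.2 (prevIdx i.succ), ω.1)) /
          (pushforward p (fun ω => ω.2 i.succ) (ω.2 i.succ) *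
            pushforward p (fun ω => (ω.2 (prevIdx i.succ), ω.1)) (ω.2 (prevIdx i.succ), ω.1))) -
      logb 2 (pushforward p (fun ω => ω.2) ω.2 / ∏ i, pushforward p (fun ω => ω.2 i) (ω.2 i)) =
    logb 2 (p ω / condIndepLaw p (fun y => y 0) ω) := by
  have hE : ∀ i : Fin n, pushforward p (fun ω => (ω.2 i.succ, (ω.2 (prevIdx i.succ), ω.1)))
      (ω.2 i.succ, (ω.2 (prevIdx i.succ), ω.1)) = margAt p {i.castSucc, i.succ} ω := by
    refine fun i => pushforward_eq_margAt fun ω' => ?_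
    simp only [Prod.ext_iff, Set.mem_insert_iff, Set.mem_singleton_iff, forall_eq_or_imp,
      forall_eq]
    rw [prevIdx_succ]
    tauto
  have hD : ∀ i : Fin n, pushforward p (fun ω => (ω.2 (prevIdx i.succ), ω.1))
      (ω.2 (prevIdx i.succ), ω.1) = margAt p {i.castSucc} ω := by
    refine fun i => pushforward_eq_margAt fun ω' => ?_
    simp only [Prod.ext_iff, Set.mem_singleton_iff, forall_eq]
    rw [prevIdx_succ]
    tauto
  have h0 : pushforward p (fun ω => (ω.1, ω.2 0)) (ω.1, ω.2 0) = margAt p {0} ω :=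
    pushforward_eq_margAt fun ω' => by simp [Prod.ext_iff]
  have hP : ∀ i, 0 < pushforward p (fun ω => ω.2 i) (ω.2 i) :=
    fun i => pushforward_apply_pos hp (fun ω => ω.2 i) hω
  have hY : 0 < pushforward p (fun ω => ω.2) ω.2 := pushforward_apply_pos hp (fun ω => ω.2) hω
  have hterm : ∀ i : Fin n, logb 2 (margAt p {i.castSucc, i.succ} ω /
      (pushforward p (fun ω => ω.2 i.succ) (ω.2 i.succ) * margAt p {i.castSucc} ω)) =
      logb 2 (margAt p {i.castSucc, i.succ} ω / margAt p {i.castSucc} ω) -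
        logb 2 (pushforward p (fun ω => ω.2 i.succ) (ω.2 i.succ)) := fun i => by
    rw [div_mul_eq_div_div_swap,
      logb_div (div_pos (margAt_pos hp _ hω) (margAt_pos hp _ hω)).ne' (hP _).ne']
  simp only [hE, hD, hterm]
  rw [sum_sub_distrib, sum_logb_margAt_div hM hp hω, condIndepLaw, h0, Fin.prod_univ_succ,
    logb_div hY.ne' (mul_pos (hP 0) (prod_pos fun i _ => hP _)).ne',
    logb_mul (hP 0).ne' (prod_pos fun i _ => hP _).ne', logb_prod _ _ fun i _ => (hP _).ne',
    logb_div hω.ne' (div_pos (mul_pos (margAt_pos hp _ hω) hY) (hP 0)).ne',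
    logb_div (mul_pos (margAt_pos hp _ hω) hY).ne' (hP 0).ne',
    logb_mul (margAt_pos hp _ hω).ne' hY.ne']
  ring

end MarkovStep

theorem klDiv_blocks_le_sum_mutualInfo_general
    {k : ℕ} (hk : 1 ≤ k) (γ : Type*) (β : Fin k → Type*)
    [Fintype γ] [DecidableEq γ]
    [∀ i, Fintype (β i)] [∀ i, DecidableEq (β i)]
    (p : γ × ((i : Fin k) → β i) → ℝ) (hp : IsPMF p)
    (hMarkov : ∀ i : Fin k, 2 ≤ (i : ℕ) →
      ∀ (a : (j : {j : Fin k // (j : ℕ) < (i : ℕ) - 1}) → β j)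
        (b : β i) (c : γ × β (prevIdx i)),
        pushforward p
            (fun ω => ((fun j : {j : Fin k // (j : ℕ) < (i : ℕ) - 1} => ω.2 j),
              ω.2 i, (ω.1, ω.2 (prevIdx i)))) (a, b, c) *
          pushforward p (fun ω => (ω.1, ω.2 (prevIdx i))) c =
        pushforward p
            (fun ω => ((fun j : {j : Fin k // (j : ℕ) < (i : ℕ) - 1} => ω.2 j),
              (ω.1, ω.2 (prevIdx i)))) (a, c) *
          pushforward p (fun ω => (ω.2 i, (ω.1, ω.2 (prevIdx i)))) (b, c)) :
    klDiv (pushforward p (fun ω => ω.2))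
        (fun y => ∏ i, pushforward p (fun ω => ω.2 i) (y i)) ≤
      ENNReal.ofReal (∑ i : Fin k, if 1 ≤ (i : ℕ) then
        (shannonEntropy (pushforward p (fun ω => ω.2 i)) +
          shannonEntropy (pushforward p (fun ω => (ω.2 (prevIdx i), ω.1))) -
          shannonEntropy (pushforward p (fun ω => (ω.2 i, (ω.2 (prevIdx i), ω.1)))))
        else 0) := by
  obtain ⟨n, rfl⟩ : ∃ n, k = n + 1 := ⟨k - 1, by omega⟩
  have hp0 := hp.1
  rw [klDiv_pushforward hp0 (fun ω => ω.2)
    fun ω hω => prod_pos fun i _ => pushforward_apply_pos hp0 (fun ω => ω.2 i) hω]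
  refine ENNReal.ofReal_le_ofReal ?_
  simp only [Fin.sum_univ_succ, Fin.val_zero, Fin.val_succ, Nat.le_add_left, if_true,
    nonpos_iff_eq_zero, one_ne_zero, if_false, zero_add, ← mutualInfo.eq_1, mutualInfo_eq_sum hp0]
  rw [sum_comm, ← sub_nonneg, ← sum_sub_distrib]
  simp_rw [← mul_sum, ← mul_sub]
  let y₀ : ((i : Fin (n + 1)) → β i) → β 0 := fun y => y 0
  refine (sum_mul_logb_div_nonneg hp0 (condIndepLaw_nonneg y₀ hp0)
    (fun ω => condIndepLaw_pos y₀ hp0) (sum_condIndepLaw_le y₀ hp0)).trans_eq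
    (sum_congr rfl fun ω _ => ?_)
  rcases (hp0 ω).eq_or_lt with hω | hω
  · simp [← hω]
  · rw [sum_logb_pmi_sub_logb_div_prod hMarkov hp0 hω]

/-- Abstract form of Lemma 3: if for every (1-based) `i ∈ {3,…,k}` the
variables `Y_{1:i−2}` and `Y_i` are conditionally independent given
`(C, Y_{i−1})`, then `D(p_{Y_{1:k}} ‖ ∏ᵢ p_{Y_i}) ≤ ∑_{i=2}^k I(Y_i ; (Y_{i−1}, C))`.
Indices are 0-based here: the conditional independence hypothesis is stated
for `i : Fin k` with `2 ≤ (i : ℕ)` (prefix `j < i − 1`), and the sum ranges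
over `i` with `1 ≤ (i : ℕ)`; mutual information is
`I(A;B) = H(p_A) + H(p_B) − H(p_{AB})`. -/
theorem klDiv_blocks_le_sum_mutualInfo
    {k : ℕ} (hk : 1 ≤ k) (γ : Type*) (β : Fin k → Type*)
    [Fintype γ] [DecidableEq γ] [Nonempty γ]
    [∀ i, Fintype (β i)] [∀ i, DecidableEq (β i)] [∀ i, Nonempty (β i)]
    (p : γ × ((i : Fin k) → β i) → ℝ) (hp : IsPMF p)
    (hMarkov : ∀ i : Fin k, 2 ≤ (i : ℕ) →
      ∀ (a : (j : {j : Fin k // (j : ℕ) < (i : ℕ) - 1}) → β j)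
        (b : β i) (c : γ × β (prevIdx i)),
        pushforward p
            (fun ω => ((fun j : {j : Fin k // (j : ℕ) < (i : ℕ) - 1} => ω.2 j),
              ω.2 i, (ω.1, ω.2 (prevIdx i)))) (a, b, c) *
          pushforward p (fun ω => (ω.1, ω.2 (prevIdx i))) c =
        pushforward p
            (fun ω => ((fun j : {j : Fin k // (j : ℕ) < (i : ℕ) - 1} => ω.2 j),
              (ω.1, ω.2 (prevIdx i)))) (a, c) *
          pushforward p (fun ω => (ω.2 i, (ω.1, ω.2 (prevIdx i)))) (b, c)) :
    klDiv (pushforward p (fun ω => ω.2))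
        (fun y => ∏ i, pushforward p (fun ω => ω.2 i) (y i)) ≤
      ENNReal.ofReal (∑ i : Fin k, if 1 ≤ (i : ℕ) then
        (shannonEntropy (pushforward p (fun ω => ω.2 i)) +
          shannonEntropy (pushforward p (fun ω => (ω.2 (prevIdx i), ω.1))) -
          shannonEntropy (pushforward p (fun ω => (ω.2 i, (ω.2 (prevIdx i), ω.1)))))
        else 0) :=
  klDiv_blocks_le_sum_mutualInfo_general hk γ β p hp hMarkov
end

section
/- Let 𝒴 be a finite nonempty set, let q be a pmf on 𝒴 with q(y) > 0 for all y, let k, N ≥ 1, and let p be a pmf on (𝒴^N)^k with block marginals p₁, …, p_k on 𝒴^N. Suppose D( p ‖ ∏_{i=1}^k p_i ) ≤ a and D( q^{⊗N} ‖ p_i ) ≤ b for every i ∈ {1, …, k}, where a, b ≥ 0. Then D( p ‖ q^{⊗kN} ) ≤ kN · log₂(1/μ_q) · √(2 ln 2) · ( √a + √(k b) ), where μ_q = min_{y∈𝒴} q(y). (Abstract form of Lemma 4 of the paper, showing the target output distribution is approximated jointly over all blocks.) -/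
open scoped ENNReal BigOperators

attribute [local instance] Classical.propDecidable

/-!
Write `r = ∏ᵢ pᵢ` and `u = q^{⊗kN}`. Pinsker's inequality turns the two hypotheses into
`‖p - r‖₁ ≤ √(2 ln 2 · a)` and, relative entropy being additive over independent blocks,
`‖u - r‖₁ ≤ √(2 ln 2 · k b)`. Since every atom of `u` has mass at least `μ_q^{kN}`, the reverse
Pinsker inequality `D(p‖u) ≤ log₂ (1 / min u) · ‖p - u‖₁` and the triangle inequality in `ℓ¹`
give the claim.
-/

open Real Finset

namespace IsPMF

variable {α : Type*} [Fintype α] {p : α → ℝ}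

lemma le_one_s14 (hp : IsPMF p) (x : α) : p x ≤ 1 :=
  hp.2 ▸ single_le_sum (fun y _ => hp.1 y) (mem_univ x)

lemma add_le_one (hp : IsPMF p) {x y : α} (hxy : x ≠ y) : p x + p y ≤ 1 := by
  rw [← sum_pair hxy, ← hp.2]
  exact sum_le_univ_sum_of_nonneg hp.1

lemma nonempty (hp : IsPMF p) : Nonempty α := by
  by_contra h
  rw [not_nonempty_iff] at h
  simpa using hp.2

lemma pushforward {Ω β : Type*} [Fintype Ω] [Fintype β] [DecidableEq β] {p : Ω → ℝ}
    (hp : IsPMF p) (f : Ω → β) : IsPMF (pushforward p f) := by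
  refine ⟨fun b => sum_nonneg fun ω _ => ?_, ?_⟩
  · split_ifs
    exacts [hp.1 ω, le_rfl]
  · unfold _root_.pushforward
    rw [sum_comm]
    simpa only [sum_ite_eq, mem_univ, if_true] using hp.2

lemma pi {ι : Type*} [Fintype ι] [DecidableEq ι] {β : ι → Type*} [∀ i, Fintype (β i)]
    {f : ∀ i, β i → ℝ} (hf : ∀ i, IsPMF (f i)) : IsPMF fun ω : (∀ i, β i) => ∏ i, f i (ω i) :=
  ⟨fun ω => prod_nonneg fun i _ => (hf i).1 (ω i), by
    rw [← Fintype.prod_sum, prod_eq_one fun i _ => (hf i).2]⟩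

end IsPMF

noncomputable def klSum {α : Type*} [Fintype α] (p q : α → ℝ) : ℝ :=
  ∑ x, p x * logb 2 (p x / q x)

section KL

variable {α : Type*} [Fintype α] {p q : α → ℝ}

lemma klDiv_eq_ofReal_klSum (hq : ∀ x, 0 < q x) : klDiv p q = ENNReal.ofReal (klSum p q) :=
  if_pos fun x hx => absurd hx (hq x).ne'

lemma klSum_le_of_klDiv_le {c : ℝ} (hq : ∀ x, 0 < q x) (hc : 0 ≤ c)
    (h : klDiv p q ≤ ENNReal.ofReal c) : klSum p q ≤ c := by
  rwa [klDiv_eq_ofReal_klSum hq, ENNReal.ofReal_le_ofReal_iff hc] at h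

lemma pos_of_klDiv_ne_top (h : klDiv p q ≠ ⊤) (hp : ∀ x, 0 < p x) (hq : ∀ x, 0 ≤ q x)
    (x : α) : 0 < q x := by
  refine (hq x).lt_of_ne fun hx => (hp x).ne' ?_
  by_contra hpx
  exact h (if_neg fun hsupp => hpx (hsupp x hx.symm))

end KL

section Tensorization

variable {ι β : Type*} [Fintype ι] [DecidableEq ι] [Fintype β]

lemma sum_prod_mul_apply_eq {f : ι → β → ℝ} (hf : ∀ j, ∑ y, f j y = 1) (i : ι) (h : β → ℝ) :
    ∑ ω : ι → β, (∏ j, f j (ω j)) * h (ω i) = ∑ y, f i y * h y := by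
  calc ∑ ω : ι → β, (∏ j, f j (ω j)) * h (ω i)
      = ∑ ω : ι → β, ∏ j, f j (ω j) * (if j = i then h (ω j) else 1) := by
        simp only [prod_mul_distrib, prod_ite_eq', mem_univ, if_true]
    _ = ∏ j, ∑ y, f j y * (if j = i then h y else 1) :=
        (Fintype.prod_sum fun j y => f j y * if j = i then h y else 1).symm
    _ = ∑ y, f i y * h y := by
        rw [prod_eq_single i (fun j _ hj => by simp [hj, hf]) (by simp)]
        simp

lemma klSum_pi {f g : ι → β → ℝ} (hf : ∀ i, IsPMF (f i)) (hfpos : ∀ i y, 0 < f i y)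
    (hgpos : ∀ i y, 0 < g i y) :
    klSum (fun ω : ι → β => ∏ i, f i (ω i)) (fun ω => ∏ i, g i (ω i)) =
      ∑ i, klSum (f i) (g i) := by
  have hlog : ∀ ω : ι → β, logb 2 ((∏ i, f i (ω i)) / ∏ i, g i (ω i)) =
      ∑ i, logb 2 (f i (ω i) / g i (ω i)) := fun ω => by
    rw [← prod_div_distrib, logb_prod _ _ fun i _ => (div_pos (hfpos i _) (hgpos i _)).ne']
  simp only [klSum, hlog, mul_sum]
  rw [sum_comm]
  exact sum_congr rfl fun i _ =>
    sum_prod_mul_apply_eq (fun j => (hf j).2) i fun y => logb 2 (f i y / g i y)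

end Tensorization

section Pinsker

open Set

/-- The slack in `x log x - x + 1 ≥ 3 (x - 1)² / (2 (x + 2))`, which yields Pinsker's inequality
after Cauchy–Schwarz. -/
noncomputable def pinskerGap (x : ℝ) : ℝ :=
  x * log x - x + 1 - 3 / 2 * ((x - 1) ^ 2 / (x + 2))

lemma hasDerivAt_pinskerGap {x : ℝ} (hx : 0 < x) :
    HasDerivAt pinskerGap (log x - 3 / 2 * ((x ^ 2 + 4 * x - 5) / (x + 2) ^ 2)) x := by
  have h2 : x + 2 ≠ 0 := by positivity
  refine ((((hasDerivAt_mul_log hx.ne').sub (hasDerivAt_id x)).add_const 1).sub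
    ((((hasDerivAt_id x).sub_const 1).pow 2).div ((hasDerivAt_id x).add_const 2) h2
      |>.const_mul (3 / 2 : ℝ))).congr_deriv ?_
  simp
  field_simp
  ring

lemma convexOn_pinskerGap : ConvexOn ℝ (Ici 0) pinskerGap := by
  have hcont : ContinuousOn pinskerGap (Ici 0) := by
    have : ∀ x ∈ Ici (0 : ℝ), x + 2 ≠ 0 := fun x (hx : 0 ≤ x) => by positivity
    exact ((continuous_mul_log.continuousOn.sub continuousOn_id).add continuousOn_const).sub
      (continuousOn_const.mul ((by fun_prop : Continuous fun x : ℝ => (x - 1) ^ 2).continuousOn.div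
        (by fun_prop) this))
  refine convexOn_of_hasDerivWithinAt2_nonneg (convex_Ici 0) hcont
    (f' := fun x => log x - 3 / 2 * ((x ^ 2 + 4 * x - 5) / (x + 2) ^ 2))
    (f'' := fun x => (x - 1) ^ 2 * (x + 8) / (x * (x + 2) ^ 3)) ?_ ?_ ?_ <;>
    rw [interior_Ici] <;> intro x (hx : 0 < x)
  · exact (hasDerivAt_pinskerGap hx).hasDerivWithinAt
  · have h2 : x + 2 ≠ 0 := by positivity
    refine HasDerivAt.hasDerivWithinAt (((hasDerivAt_log hx.ne').sub
      (((((hasDerivAt_id x).pow 2).add ((hasDerivAt_id x).const_mul 4)).sub_const 5).div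
        (((hasDerivAt_id x).add_const 2).pow 2) (pow_ne_zero 2 h2)
          |>.const_mul (3 / 2 : ℝ))).congr_deriv ?_)
    simp
    field_simp
    ring
  · positivity

lemma pinskerGap_nonneg {x : ℝ} (hx : 0 ≤ x) : 0 ≤ pinskerGap x := by
  have hderiv : derivWithin pinskerGap (Ioi 1) 1 = 0 := by
    rw [(hasDerivAt_pinskerGap one_pos).hasDerivWithinAt.derivWithin (uniqueDiffWithinAt_Ioi 1)]
    norm_num
  have hmin := convexOn_pinskerGap.isMinOn_of_rightDeriv_eq_zero (by simp) hderiv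
  simpa [pinskerGap] using hmin (mem_Ici.2 hx)

lemma three_halves_mul_sq_div_le {p u : ℝ} (hp : 0 ≤ p) (hu : 0 < u) :
    3 / 2 * ((p - u) ^ 2 / (p + 2 * u)) ≤ p * log (p / u) - p + u := by
  have hgap := mul_nonneg hu.le (pinskerGap_nonneg (div_nonneg hp hu.le))
  have : u * pinskerGap (p / u) =
      p * log (p / u) - p + u - 3 / 2 * ((p - u) ^ 2 / (p + 2 * u)) := by
    unfold pinskerGap
    field_simp
  linarith

variable {α : Type*} [Fintype α] {f g : α → ℝ}

/-- **Pinsker's inequality**. -/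
lemma sq_sum_abs_sub_le_klSum (hf : IsPMF f) (hg : IsPMF g) (hgpos : ∀ x, 0 < g x) :
    (∑ x, |f x - g x|) ^ 2 ≤ 2 * log 2 * klSum f g := by
  have hw : ∀ x ∈ Finset.univ, 0 < f x + 2 * g x := fun x _ => by linarith [hf.1 x, hgpos x]
  have hwsum : ∑ x, (f x + 2 * g x) = 3 := by
    rw [sum_add_distrib, ← mul_sum, hf.2, hg.2]; norm_num
  have hcs : (∑ x, |f x - g x|) ^ 2 / 3 ≤ ∑ x, (f x - g x) ^ 2 / (f x + 2 * g x) := by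
    simpa only [hwsum, sq_abs] using sq_sum_div_le_sum_sq_div Finset.univ (fun x => |f x - g x|) hw
  have hpointwise : 3 / 2 * ∑ x, (f x - g x) ^ 2 / (f x + 2 * g x) ≤ log 2 * klSum f g := by
    calc 3 / 2 * ∑ x, (f x - g x) ^ 2 / (f x + 2 * g x)
        ≤ ∑ x, (f x * log (f x / g x) - f x + g x) := by
          rw [mul_sum]
          exact sum_le_sum fun x _ => three_halves_mul_sq_div_le (hf.1 x) (hgpos x)
      _ = log 2 * klSum f g := by
          rw [sum_add_distrib, sum_sub_distrib, hf.2, hg.2, klSum, mul_sum]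
          simp only [logb, sub_add_cancel]
          refine sum_congr rfl fun x _ => ?_
          field_simp
  linarith

lemma sum_abs_sub_le_of_klSum_le {c : ℝ} (hf : IsPMF f) (hg : IsPMF g) (hgpos : ∀ x, 0 < g x)
    (h : klSum f g ≤ c) : ∑ x, |f x - g x| ≤ √(2 * log 2) * √c := by
  rw [← sqrt_mul (by positivity)]
  exact le_sqrt_of_sq_le ((sq_sum_abs_sub_le_klSum hf hg hgpos).trans (by gcongr))

end Pinsker

section ReversePinsker

lemma log_inv_le_two_mul_log_inv_mul_one_sub {μ s : ℝ} (hμ : 0 < μ) (hμ2 : μ ≤ 1 / 2)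
    (hμs : μ ≤ s) (hs1 : s ≤ 1) : log s⁻¹ ≤ 2 * log μ⁻¹ * (1 - s) := by
  set L := log μ⁻¹
  have hL : 0 ≤ L := log_nonneg (one_le_inv₀ hμ |>.2 (by linarith))
  have hconc : ConcaveOn ℝ (Set.Ioi 0) fun t => log t + -2 * L * t + 2 * L :=
    ((strictConcaveOn_log_Ioi.concaveOn.add
      ((LinearMap.mulLeft ℝ (-2 * L)).concaveOn (convex_Ioi 0))).add_const (2 * L))
  have hmin := hconc.min_le_of_mem_Icc hμ (Set.mem_Ioi.2 one_pos) ⟨hμs, hs1⟩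
  have hμval : log μ + -2 * L * μ + 2 * L = L * (1 - 2 * μ) := by
    rw [show log μ = -L by simp [L]]; ring
  simp only [hμval, log_one] at hmin
  have := mul_nonneg hL (by linarith : 0 ≤ 1 - 2 * μ)
  rw [log_inv]
  rcases min_le_iff.1 hmin with h | h <;> linarith

lemma mul_log_div_le_two_mul_log_inv_mul_sub {μ u p : ℝ} (hμ : 0 < μ) (hμ2 : μ ≤ 1 / 2)
    (hμu : μ ≤ u) (hup : u ≤ p) (hp1 : p ≤ 1) : p * log (p / u) ≤ 2 * log μ⁻¹ * (p - u) := by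
  set L := log μ⁻¹
  have hu : 0 < u := hμ.trans_le hμu
  -- `t ↦ 2L (t - u) - t log (t / u)` is concave, vanishes at `u` and is nonnegative at `1`.
  have hconc : ConcaveOn ℝ (Set.Ici 0) fun t => negMulLog t + (2 * L + log u) * t + -2 * L * u :=
    ((concaveOn_negMulLog.add
      ((LinearMap.mulLeft ℝ (2 * L + log u)).concaveOn (convex_Ici 0))).add_const (-2 * L * u))
  have hmin := hconc.min_le_of_mem_Icc hu.le (Set.mem_Ici.2 zero_le_one) ⟨hup, hp1⟩
  have hend := log_inv_le_two_mul_log_inv_mul_one_sub hμ hμ2 hμu (hup.trans hp1)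
  rw [log_div (hu.trans_le hup).ne' hu.ne']
  rw [log_inv] at hend
  simp only [negMulLog, log_one] at hmin
  rcases min_le_iff.1 hmin with h | h <;> nlinarith

lemma mul_logb_div_le_logb_inv_mul {μ u p : ℝ} (hμ : 0 < μ) (hμ2 : μ ≤ 1 / 2) (hμu : μ ≤ u)
    (hp0 : 0 ≤ p) (hp1 : p ≤ 1) : p * logb 2 (p / u) ≤ logb 2 μ⁻¹ * (|p - u| + (p - u)) := by
  have hu : 0 < u := hμ.trans_le hμu
  rcases le_total p u with hpu | hup
  · rw [abs_of_nonpos (sub_nonpos.2 hpu), neg_add_cancel, mul_zero]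
    exact mul_nonpos_of_nonneg_of_nonpos hp0
      (logb_nonpos one_lt_two (div_nonneg hp0 hu.le) (div_le_one_of_le₀ hpu hu.le))
  · rw [abs_of_nonneg (sub_nonneg.2 hup), logb, logb, mul_div_assoc', div_mul_eq_mul_div,
      div_le_div_iff_of_pos_right (log_pos one_lt_two)]
    linarith [mul_log_div_le_two_mul_log_inv_mul_sub hμ hμ2 hμu hup hp1]

variable {α : Type*} [Fintype α] {p u : α → ℝ} {μ : ℝ}

lemma klSum_le_logb_inv_mul_sum_abs_sub (hp : IsPMF p) (hu : IsPMF u) (hμ : 0 < μ)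
    (hμu : ∀ x, μ ≤ u x) : klSum p u ≤ logb 2 μ⁻¹ * ∑ x, |p x - u x| := by
  by_cases hμ2 : μ ≤ 1 / 2
  · calc klSum p u ≤ ∑ x, logb 2 μ⁻¹ * (|p x - u x| + (p x - u x)) :=
          sum_le_sum fun x _ => mul_logb_div_le_logb_inv_mul hμ hμ2 (hμu x) (hp.1 x) (hp.le_one_s14 x)
      _ = logb 2 μ⁻¹ * ∑ x, |p x - u x| := by
          rw [← mul_sum, sum_add_distrib, sum_sub_distrib, hp.2, hu.2, sub_self, add_zero]
  -- Otherwise every atom of `u` weighs more than `1/2`, so there is only one atom and `p = u`.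
  have : Subsingleton α := ⟨fun x y => by_contra fun hxy => by
    linarith [hu.add_le_one hxy, hμu x, hμu y]⟩
  have hpu : ∀ x, p x = u x := fun x => by
    rw [← Fintype.sum_subsingleton p x, ← Fintype.sum_subsingleton u x, hp.2, hu.2]
  simp [klSum, hpu, fun x => div_self (hμ.trans_le (hμu x)).ne']

lemma klSum_le_of_klSum_le_of_klSum_le {r : α → ℝ} {a b : ℝ} (hp : IsPMF p) (hu : IsPMF u)
    (hr : IsPMF r) (hrpos : ∀ x, 0 < r x) (hμ : 0 < μ) (hμu : ∀ x, μ ≤ u x)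
    (hpr : klSum p r ≤ a) (hur : klSum u r ≤ b) :
    klSum p u ≤ logb 2 μ⁻¹ * √(2 * log 2) * (√a + √b) := by
  obtain ⟨x₀⟩ := hu.nonempty
  have hlog : 0 ≤ logb 2 μ⁻¹ :=
    logb_nonneg one_lt_two ((one_le_inv₀ hμ).2 ((hμu x₀).trans (hu.le_one_s14 x₀)))
  have htriangle : ∑ x, |p x - u x| ≤ ∑ x, |p x - r x| + ∑ x, |u x - r x| := by
    rw [← sum_add_distrib]
    gcongr with x
    rw [abs_sub_comm (u x)]
    exact abs_sub_le _ _ _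
  calc klSum p u ≤ logb 2 μ⁻¹ * ∑ x, |p x - u x| :=
        klSum_le_logb_inv_mul_sum_abs_sub hp hu hμ hμu
    _ ≤ logb 2 μ⁻¹ * (√(2 * log 2) * √a + √(2 * log 2) * √b) := by
        gcongr
        exact htriangle.trans (add_le_add (sum_abs_sub_le_of_klSum_le hp hr hrpos hpr)
          (sum_abs_sub_le_of_klSum_le hu hr hrpos hur))
    _ = logb 2 μ⁻¹ * √(2 * log 2) * (√a + √b) := by ring

end ReversePinsker

lemma pow_card_le_prod_of_le {ι : Type*} [Fintype ι] {f : ι → ℝ} {c : ℝ} (hc : 0 ≤ c)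
    (h : ∀ i, c ≤ f i) : c ^ Fintype.card ι ≤ ∏ i, f i := by
  simpa using prod_le_prod (s := Finset.univ) (fun _ _ => hc) fun i _ => h i

theorem klSum_le_of_blocks {ι β : Type*} [Fintype ι] [DecidableEq ι] [Fintype β]
    [DecidableEq β] {p : (ι → β) → ℝ} {Q : β → ℝ} {μ a b : ℝ} (hp : IsPMF p) (hQ : IsPMF Q)
    (hμ : 0 < μ) (hμQ : ∀ y, μ ≤ Q y) (ha : 0 ≤ a) (hb : 0 ≤ b)
    (hblocks : klDiv p (fun ω => ∏ i, pushforward p (fun ν => ν i) (ω i)) ≤ ENNReal.ofReal a)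
    (hmarg : ∀ i, klDiv Q (pushforward p fun ν => ν i) ≤ ENNReal.ofReal b) :
    klSum p (fun ω => ∏ i, Q (ω i)) ≤
      Fintype.card ι * logb 2 μ⁻¹ * √(2 * log 2) * (√a + √(Fintype.card ι * b)) := by
  set P : ι → β → ℝ := fun i => pushforward p fun ν => ν i
  have hQpos : ∀ y, 0 < Q y := fun y => hμ.trans_le (hμQ y)
  have hP : ∀ i, IsPMF (P i) := fun i => hp.pushforward _
  have hPpos : ∀ i y, 0 < P i y := fun i =>
    pos_of_klDiv_ne_top (ne_top_of_le_ne_top ENNReal.ofReal_ne_top (hmarg i)) hQpos (hP i).1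
  have hrpos : ∀ ω : ι → β, 0 < ∏ i, P i (ω i) := fun ω => prod_pos fun i _ => hPpos i (ω i)
  have hur : klSum (fun ω : ι → β => ∏ i, Q (ω i)) (fun ω => ∏ i, P i (ω i)) ≤
      Fintype.card ι * b := by
    rw [klSum_pi (fun _ => hQ) (fun _ => hQpos) hPpos]
    calc ∑ i, klSum Q (P i) ≤ ∑ _i : ι, b :=
          sum_le_sum fun i _ => klSum_le_of_klDiv_le (hPpos i) hb (hmarg i)
      _ = Fintype.card ι * b := by simp
  calc klSum p (fun ω => ∏ i, Q (ω i))
      ≤ logb 2 (μ ^ Fintype.card ι)⁻¹ * √(2 * log 2) * (√a + √(Fintype.card ι * b)) :=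
        klSum_le_of_klSum_le_of_klSum_le hp (IsPMF.pi fun _ => hQ) (IsPMF.pi hP) hrpos
          (pow_pos hμ _) (fun ω => pow_card_le_prod_of_le hμ.le fun i => hμQ (ω i))
          (klSum_le_of_klDiv_le hrpos ha hblocks) hur
    _ = _ := by rw [← inv_pow, logb_pow]

theorem klDiv_all_blocks_le_general
    {𝒴 : Type*} [Fintype 𝒴] [DecidableEq 𝒴] [Nonempty 𝒴]
    {k N : ℕ}
    (q : 𝒴 → ℝ) (hq : IsPMF q) (hqpos : ∀ y, 0 < q y)
    (p : (Fin k → Fin N → 𝒴) → ℝ) (hp : IsPMF p)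
    (a b : ℝ) (ha : 0 ≤ a) (hb : 0 ≤ b)
    (hblocks : klDiv p
        (fun ω => ∏ i, pushforward p (fun ν => ν i) (ω i)) ≤ ENNReal.ofReal a)
    (hmarg : ∀ i : Fin k,
      klDiv (fun y : Fin N → 𝒴 => ∏ j, q (y j)) (pushforward p (fun ν => ν i)) ≤
        ENNReal.ofReal b) :
    klDiv p (fun ω => ∏ i, ∏ j, q (ω i j)) ≤
      ENNReal.ofReal
        ((k : ℝ) * (N : ℝ) *
          Real.logb 2 ((Finset.univ.inf' Finset.univ_nonempty q)⁻¹) *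
          Real.sqrt (2 * Real.log 2) *
          (Real.sqrt a + Real.sqrt ((k : ℝ) * b))) := by
  set μ := univ.inf' univ_nonempty q
  have hμ : 0 < μ := (lt_inf'_iff univ_nonempty).2 fun y _ => hqpos y
  have hμQ : ∀ y : Fin N → 𝒴, μ ^ N ≤ ∏ j, q (y j) := fun y => by
    simpa using pow_card_le_prod_of_le hμ.le fun j => inf'_le q (mem_univ (y j))
  have hupos : ∀ ω : Fin k → Fin N → 𝒴, 0 < ∏ i, ∏ j, q (ω i j) := fun ω =>
    prod_pos fun i _ => prod_pos fun j _ => hqpos (ω i j)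
  rw [klDiv_eq_ofReal_klSum hupos]
  have hbound := klSum_le_of_blocks (Q := fun y => ∏ j, q (y j)) hp
    (IsPMF.pi fun _ => hq) (pow_pos hμ N) hμQ ha hb hblocks hmarg
  refine ENNReal.ofReal_le_ofReal (hbound.trans_eq ?_)
  rw [Fintype.card_fin, ← inv_pow, logb_pow, ← mul_assoc]

/-- Abstract form of Lemma 4: if `D(p‖∏ᵢ pᵢ) ≤ a` and `D(q^{⊗N}‖pᵢ) ≤ b`
for all block marginals `pᵢ` of a pmf `p` on `(𝒴^N)^k`, then
`D(p‖q^{⊗kN}) ≤ kN · log₂(1/μ_q) · √(2 ln 2) · (√a + √(kb))`. -/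
theorem klDiv_all_blocks_le
    {𝒴 : Type*} [Fintype 𝒴] [DecidableEq 𝒴] [Nonempty 𝒴]
    {k N : ℕ} (hk : 1 ≤ k) (hN : 1 ≤ N)
    (q : 𝒴 → ℝ) (hq : IsPMF q) (hqpos : ∀ y, 0 < q y)
    (p : (Fin k → Fin N → 𝒴) → ℝ) (hp : IsPMF p)
    (a b : ℝ) (ha : 0 ≤ a) (hb : 0 ≤ b)
    (hblocks : klDiv p
        (fun ω => ∏ i, pushforward p (fun ν => ν i) (ω i)) ≤ ENNReal.ofReal a)
    (hmarg : ∀ i : Fin k,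
      klDiv (fun y : Fin N → 𝒴 => ∏ j, q (y j)) (pushforward p (fun ν => ν i)) ≤
        ENNReal.ofReal b) :
    klDiv p (fun ω => ∏ i, ∏ j, q (ω i j)) ≤
      ENNReal.ofReal
        ((k : ℝ) * (N : ℝ) *
          Real.logb 2 ((Finset.univ.inf' Finset.univ_nonempty q)⁻¹) *
          Real.sqrt (2 * Real.log 2) *
          (Real.sqrt a + Real.sqrt ((k : ℝ) * b))) :=
  klDiv_all_blocks_le_general q hq hqpos p hp a b ha hb hblocks hmarg
end

section
/- Let 𝒱, 𝒳, 𝒴 be finite nonempty sets and let p and q be pmfs on 𝒱 × 𝒳 × 𝒴 such that q(v,x,y) > 0 for all (v,x,y) and both p and q satisfy the Markov chain X − V − Y, i.e., p(v,x,y) · p_V(v) = p_{VX}(v,x) · p_{VY}(v,y) for all (v,x,y), and similarly for q. Then D(p ‖ q) ≤ log₂(1/μ_q) · √(2 ln 2) · [ √(D(q_{VX} ‖ p_{VX})) + √(D(q_V ‖ p_V)) + √(D(q_{VY} ‖ p_{VY})) ], where μ_q = min_{(v,x,y)} q(v,x,y). (Abstract single-letter form of the first chain of inequalities, Eq. (2),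 in the proof of Lemma 9 of the paper.) -/
/-!
Every value of `q` is at least `μ`, so concavity of `log` gives
`D(p‖q) ≤ log₂(1/μ) · ‖p - q‖₁`. Under the Markov chain both `p` and `q` factor as
`r_{VX} · r_{VY} / r_V`, and telescoping this product through two intermediate products bounds
`‖p - q‖₁` by the `ℓ¹` distances of the `(V,X)`-, `V`- and `(V,Y)`-marginals. Pinsker's inequality
`‖a - b‖₁ ≤ √(2 ln 2 · D(a‖b))` bounds each of these; it follows from the pointwise inequality
`3 (a - b)² ≤ 2 (a + 2b) (a ln(a/b) - a + b)` and Cauchy–Schwarz.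
-/

open scoped ENNReal BigOperators

attribute [local instance] Classical.propDecidable

/-- `V`-marginal of a joint pmf on `𝒱 × 𝒳 × 𝒴`. -/
noncomputable def margV3 {𝒱 𝒳 𝒴 : Type*} [Fintype 𝒱] [Fintype 𝒳] [Fintype 𝒴]
    (r : 𝒱 × 𝒳 × 𝒴 → ℝ) : 𝒱 → ℝ :=
  fun v => ∑ x, ∑ y, r (v, x, y)

/-- `(V,X)`-marginal of a joint pmf on `𝒱 × 𝒳 × 𝒴`. -/
noncomputable def margVX {𝒱 𝒳 𝒴 : Type*} [Fintype 𝒱] [Fintype 𝒳] [Fintype 𝒴]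
    (r : 𝒱 × 𝒳 × 𝒴 → ℝ) : 𝒱 × 𝒳 → ℝ :=
  fun vx => ∑ y, r (vx.1, vx.2, y)

/-- `(V,Y)`-marginal of a joint pmf on `𝒱 × 𝒳 × 𝒴`. -/
noncomputable def margVY {𝒱 𝒳 𝒴 : Type*} [Fintype 𝒱] [Fintype 𝒳] [Fintype 𝒴]
    (r : 𝒱 × 𝒳 × 𝒴 → ℝ) : 𝒱 × 𝒴 → ℝ :=
  fun vy => ∑ x, r (vy.1, x, vy.2)

/-- The Markov chain `X − V − Y` under a joint pmf `r` on `𝒱 × 𝒳 × 𝒴`: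
`r(v,x,y) · r_V(v) = r_{VX}(v,x) · r_{VY}(v,y)` for all `(v,x,y)`. -/
def MarkovXVY {𝒱 𝒳 𝒴 : Type*} [Fintype 𝒱] [Fintype 𝒳] [Fintype 𝒴]
    (r : 𝒱 × 𝒳 × 𝒴 → ℝ) : Prop :=
  ∀ v x y, r (v, x, y) * margV3 r v = margVX r (v, x) * margVY r (v, y)

open Real Set

-- The left-hand side agrees with `log` to third order at `1`.
lemma sub_one_mul_div_le_log {u : ℝ} (hu : 0 < u) :
    (u - 1) * (5 * u + 1) / (2 * u * (u + 2)) ≤ log u := by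
  set φ : ℝ → ℝ := fun u => log u - (u - 1) * (5 * u + 1) / (2 * u * (u + 2))
  have hφ : ∀ x ∈ Ioi (0 : ℝ), HasDerivAt φ ((x - 1) ^ 3 / (x ^ 2 * (x + 2) ^ 2)) x := by
    intro x hx
    have hx : 0 < x := hx
    have h : HasDerivAt φ _ x := (hasDerivAt_log hx.ne').sub
      ((((hasDerivAt_id x).sub_const 1).mul (((hasDerivAt_id x).const_mul 5).add_const 1)).div
        (((hasDerivAt_id x).const_mul 2).mul ((hasDerivAt_id x).add_const 2)) (by positivity))
    refine h.congr_deriv ?_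
    have : x + 2 ≠ 0 := by positivity
    simp only [id, Pi.mul_apply]
    field_simp
    ring
  have hφ_cont : ContinuousOn φ (Ioi 0) := fun x hx => (hφ x hx).continuousAt.continuousWithinAt
  suffices φ 1 ≤ φ u by norm_num [φ] at this; linarith
  rcases le_total 1 u with h1 | h1
  · refine monotoneOn_of_hasDerivWithinAt_nonneg (convex_Ici 1)
      (hφ_cont.mono fun x (hx : 1 ≤ x) => lt_of_lt_of_le one_pos hx)
      (fun x hx => (hφ x ?_).hasDerivWithinAt) (fun x hx => ?_) self_mem_Ici h1 h1
    all_goals rw [interior_Ici] at hx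
    · exact lt_trans one_pos hx.out
    · have : 0 ≤ x - 1 := by linarith [hx.out]
      positivity
  · refine antitoneOn_of_hasDerivWithinAt_nonpos (convex_Ioc 0 1)
      (hφ_cont.mono fun x hx => hx.1)
      (fun x hx => (hφ x ?_).hasDerivWithinAt) (fun x hx => ?_) ⟨hu, h1⟩ ⟨one_pos, le_rfl⟩ h1
    all_goals rw [interior_Ioc] at hx
    · exact hx.1
    · exact div_nonpos_of_nonpos_of_nonneg
        (Odd.pow_nonpos (by decide) (by linarith [hx.2])) (by positivity)

lemma three_mul_sq_sub_le_mul_log_div {a b : ℝ} (ha : 0 ≤ a) (hb : 0 ≤ b) (hab : b = 0 → a = 0) :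
    3 * (a - b) ^ 2 ≤ 2 * (a + 2 * b) * (a * log (a / b) - a + b) := by
  rcases hb.eq_or_lt with rfl | hb
  · simp [hab rfl]
  rcases ha.eq_or_lt with rfl | ha
  · nlinarith
  have h := sub_one_mul_div_le_log (div_pos ha hb)
  rw [div_le_iff₀ (by positivity)] at h
  have key : (a - b) * (5 * a + b) ≤ 2 * a * (a + 2 * b) * log (a / b) := by
    have e₁ : (a / b - 1) * (5 * (a / b) + 1) * b ^ 2 = (a - b) * (5 * a + b) := by
      field_simp
    have e₂ : log (a / b) * (2 * (a / b) * (a / b + 2)) * b ^ 2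
        = 2 * a * (a + 2 * b) * log (a / b) := by
      field_simp
    rw [← e₁, ← e₂]
    exact mul_le_mul_of_nonneg_right h (sq_nonneg b)
  nlinarith

lemma mul_log_div_sub_add_nonneg {a b : ℝ} (ha : 0 ≤ a) (hb : 0 ≤ b) (hab : b = 0 → a = 0) :
    0 ≤ a * log (a / b) - a + b := by
  rcases hb.eq_or_lt with rfl | hb
  · simp [hab rfl]
  have h : b * InformationTheory.klFun (a / b) = a * log (a / b) - a + b := by
    rw [InformationTheory.klFun_apply]
    field_simp
    ring
  rw [← h]
  exact mul_nonneg hb.le (InformationTheory.klFun_nonneg (div_nonneg ha hb.le))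

theorem sq_sum_abs_sub_le_two_mul_sum_mul_log {β : Type*} [Fintype β] {a b : β → ℝ}
    (ha : IsPMF a) (hb : IsPMF b) (hab : ∀ z, b z = 0 → a z = 0) :
    (∑ z, |a z - b z|) ^ 2 ≤ 2 * ∑ z, a z * log (a z / b z) := by
  -- Cauchy–Schwarz against the weights `a + 2 b`, whose total mass is `3`.
  have hCS := Finset.sum_sq_le_sum_mul_sum_of_sq_le_mul Finset.univ
    (r := fun z => |a z - b z|) (f := fun z => a z + 2 * b z)
    (g := fun z => 2 / 3 * (a z * log (a z / b z) - a z + b z))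
    (fun z _ => by linarith [ha.1 z, hb.1 z])
    (fun z _ => by have := mul_log_div_sub_add_nonneg (ha.1 z) (hb.1 z) (hab z); positivity)
    (fun z _ => by
      have := three_mul_sq_sub_le_mul_log_div (ha.1 z) (hb.1 z) (hab z)
      rw [sq_abs]
      linarith)
  have hw : ∑ z, (a z + 2 * b z) = 3 := by
    rw [Finset.sum_add_distrib, ← Finset.mul_sum, ha.2, hb.2]; norm_num
  have hD : ∑ z, 2 / 3 * (a z * log (a z / b z) - a z + b z)
      = 2 / 3 * ∑ z, a z * log (a z / b z) := by
    rw [← Finset.mul_sum, Finset.sum_add_distrib, Finset.sum_sub_distrib, ha.2, hb.2]; ring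
  rw [hw, hD] at hCS
  linarith

theorem ofReal_sum_abs_sub_le_klDiv {β : Type*} [Fintype β] {a b : β → ℝ}
    (ha : IsPMF a) (hb : IsPMF b) :
    ENNReal.ofReal (∑ z, |a z - b z|) ≤ ENNReal.ofReal √(2 * log 2) * klDiv a b ^ (1 / 2 : ℝ) := by
  unfold klDiv
  split_ifs with hab
  · have hbits : 2 * log 2 * ∑ z, a z * logb 2 (a z / b z) = 2 * ∑ z, a z * log (a z / b z) := by
      simp only [logb, mul_div_assoc', ← Finset.sum_div]
      field_simp
    have hP := hbits ▸ sq_sum_abs_sub_le_two_mul_sum_mul_log ha hb hab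
    have hD : 0 ≤ ∑ z, a z * logb 2 (a z / b z) :=
      nonneg_of_mul_nonneg_right (hP.trans' (sq_nonneg _)) (by positivity)
    rw [ENNReal.ofReal_rpow_of_nonneg hD (by norm_num), ← sqrt_eq_rpow,
      ← ENNReal.ofReal_mul (sqrt_nonneg _), ← sqrt_mul (by positivity)]
    exact ENNReal.ofReal_le_ofReal (le_sqrt_of_sq_le hP)
  · rw [ENNReal.top_rpow_of_pos (by norm_num), ENNReal.mul_top (by positivity)]
    exact le_top

lemma log_inv_le_of_le {μ t : ℝ} (hμ : 0 < μ) (hμ1 : μ < 1) (hμt : μ ≤ t) (ht : t ≤ 1) :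
    log t⁻¹ ≤ (1 - t) / (1 - μ) * log μ⁻¹ := by
  have h1μ : 0 < 1 - μ := by linarith
  have h := strictConcaveOn_log_Ioi.concaveOn.2 (mem_Ioi.2 hμ) (mem_Ioi.2 one_pos)
    (div_nonneg (by linarith) h1μ.le) (div_nonneg (by linarith) h1μ.le)
    (by field_simp; ring : (1 - t) / (1 - μ) + (t - μ) / (1 - μ) = 1)
  have ht' : (1 - t) / (1 - μ) * μ + (t - μ) / (1 - μ) * 1 = t := by
    field_simp; ring
  simp only [smul_eq_mul, ht', log_one, mul_zero, add_zero] at h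
  rw [log_inv, log_inv]
  linarith

lemma mul_log_div_le {μ p q : ℝ} (hμ : 0 < μ) (hμ2 : μ ≤ 1 / 2) (hq : μ ≤ q)
    (hp0 : 0 ≤ p) (hp1 : p ≤ 1) :
    p * log (p / q) ≤ log μ⁻¹ * (p - q + |p - q|) := by
  have hq0 : 0 < q := hμ.trans_le hq
  rcases le_or_gt p q with hpq | hpq
  · rw [abs_of_nonpos (sub_nonpos.2 hpq)]
    simpa using mul_nonpos_of_nonneg_of_nonpos hp0
      (log_nonpos (by positivity) (div_le_one_of_le₀ hpq hq0.le))
  have hp : 0 < p := hq0.trans hpq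
  have hlog : 0 ≤ log μ⁻¹ := log_nonneg (one_le_inv₀ hμ |>.2 (by linarith))
  have h := log_inv_le_of_le hμ (by linarith) (hq.trans (le_div_self hq0.le hp hp1))
    ((div_le_one hp).2 hpq.le)
  rw [inv_div] at h
  have h2 : (1 - q / p) / (1 - μ) ≤ 2 * (1 - q / p) := by
    rw [div_le_iff₀ (by linarith)]
    nlinarith [(div_lt_one hp).2 hpq]
  have h3 : p * (1 - q / p) = p - q := by field_simp
  rw [abs_of_pos (sub_pos.2 hpq)]
  calc p * log (p / q) ≤ p * (2 * (1 - q / p) * log μ⁻¹) :=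
        mul_le_mul_of_nonneg_left (h.trans (mul_le_mul_of_nonneg_right h2 hlog)) hp.le
    _ = log μ⁻¹ * (p - q + (p - q)) := by rw [← h3]; ring

theorem klDiv_le_logb_inv_mul_sum_abs_sub {β : Type*} [Fintype β] {p q : β → ℝ} {μ : ℝ}
    (hp : IsPMF p) (hq : IsPMF q) (hμ : 0 < μ) (hμ2 : μ ≤ 1 / 2) (hμq : ∀ z, μ ≤ q z) :
    klDiv p q ≤ ENNReal.ofReal (logb 2 μ⁻¹ * ∑ z, |p z - q z|) := by
  rw [klDiv, if_pos fun z hz => absurd hz (hμ.trans_le (hμq z)).ne']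
  refine ENNReal.ofReal_le_ofReal ?_
  have hp1 : ∀ z, p z ≤ 1 := fun z =>
    hp.2 ▸ Finset.single_le_sum (fun z _ => hp.1 z) (Finset.mem_univ z)
  have h : ∑ z, p z * log (p z / q z) ≤ log μ⁻¹ * ∑ z, |p z - q z| :=
    calc ∑ z, p z * log (p z / q z) ≤ ∑ z, log μ⁻¹ * (p z - q z + |p z - q z|) :=
          Finset.sum_le_sum fun z _ => mul_log_div_le hμ hμ2 (hμq z) (hp.1 z) (hp1 z)
      _ = log μ⁻¹ * ∑ z, |p z - q z| := by
          rw [← Finset.mul_sum, Finset.sum_add_distrib, Finset.sum_sub_distrib, hp.2, hq.2]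
          ring
  simp only [logb, mul_div_assoc', ← Finset.sum_div, div_mul_eq_mul_div]
  exact div_le_div_of_nonneg_right h (log_pos one_lt_two).le

lemma mul_mul_abs_inv_sub_inv_le {s t : ℝ} (hs : 0 ≤ s) (ht : 0 ≤ t) :
    t * s * |s⁻¹ - t⁻¹| ≤ |s - t| := by
  rcases hs.eq_or_lt with rfl | hs
  · simp
  rcases ht.eq_or_lt with rfl | ht
  · simp
  rw [← abs_of_pos (mul_pos ht hs), ← abs_mul, abs_sub_comm s t]
  refine le_of_eq (congrArg _ ?_)
  field_simp

-- `s` or `t` may vanish: then `β` or `γ` is zero and `x / 0 = 0` keeps every step valid.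
lemma sum_sum_abs_mul_div_sub_mul_div_le {ι κ : Type*} [Fintype ι] [Fintype κ]
    (α γ : ι → ℝ) (β δ : κ → ℝ) {s t : ℝ} (hβ : ∀ y, 0 ≤ β y) (hγ : ∀ x, 0 ≤ γ x)
    (hβs : ∑ y, β y = s) (hγt : ∑ x, γ x = t) :
    ∑ x, ∑ y, |α x * β y / s - γ x * δ y / t|
      ≤ ∑ x, |α x - γ x| + |s - t| + ∑ y, |β y - δ y| := by
  have hs : 0 ≤ s := hβs ▸ Finset.sum_nonneg fun y _ => hβ y
  have ht : 0 ≤ t := hγt ▸ Finset.sum_nonneg fun x _ => hγ x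
  have hpt : ∀ x y, |α x * β y / s - γ x * δ y / t|
      ≤ |α x - γ x| * (β y / s) + γ x * β y * |s⁻¹ - t⁻¹| + γ x / t * |β y - δ y| := by
    intro x y
    have e : α x * β y / s - γ x * δ y / t
        = (α x - γ x) * (β y / s) + γ x * β y * (s⁻¹ - t⁻¹) + γ x / t * (β y - δ y) := by ring
    rw [e]
    refine (abs_add_three _ _ _).trans_eq ?_
    simp only [abs_mul, abs_of_nonneg (hβ y), abs_of_nonneg (hγ x),
      abs_of_nonneg (div_nonneg (hβ y) hs), abs_of_nonneg (div_nonneg (hγ x) ht)]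
  calc ∑ x, ∑ y, |α x * β y / s - γ x * δ y / t|
      ≤ ∑ x, ∑ y, (|α x - γ x| * (β y / s) + γ x * β y * |s⁻¹ - t⁻¹|
          + γ x / t * |β y - δ y|) :=
        Finset.sum_le_sum fun x _ => Finset.sum_le_sum fun y _ => hpt x y
    _ = (∑ x, |α x - γ x|) * (s / s) + t * s * |s⁻¹ - t⁻¹| + t / t * ∑ y, |β y - δ y| := by
        simp only [Finset.sum_add_distrib, ← Finset.mul_sum, ← Finset.sum_mul, ← Finset.sum_div,
          hβs, hγt]
    _ ≤ ∑ x, |α x - γ x| + |s - t| + ∑ y, |β y - δ y| := by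
        gcongr
        · exact mul_le_of_le_one_right (Finset.sum_nonneg fun x _ => abs_nonneg _)
            (div_self_le_one s)
        · exact mul_mul_abs_inv_sub_inv_le hs ht
        · exact mul_le_of_le_one_left (Finset.sum_nonneg fun y _ => abs_nonneg _)
            (div_self_le_one t)

section Marginals

variable {𝒱 𝒳 𝒴 : Type*} [Fintype 𝒱] [Fintype 𝒳] [Fintype 𝒴] {r : 𝒱 × 𝒳 × 𝒴 → ℝ}

lemma isPMF_margVX (hr : IsPMF r) : IsPMF (margVX r) :=
  ⟨fun _ => Finset.sum_nonneg fun _ _ => hr.1 _, by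
    simpa only [margVX, Fintype.sum_prod_type] using hr.2⟩

lemma isPMF_margVY (hr : IsPMF r) : IsPMF (margVY r) :=
  ⟨fun _ => Finset.sum_nonneg fun _ _ => hr.1 _, by
    simpa only [margVY, Fintype.sum_prod_type, Finset.sum_comm (γ := 𝒴)] using hr.2⟩

lemma isPMF_margV3 (hr : IsPMF r) : IsPMF (margV3 r) :=
  ⟨fun _ => Finset.sum_nonneg fun _ _ => Finset.sum_nonneg fun _ _ => hr.1 _, by
    simpa only [margV3, Fintype.sum_prod_type] using hr.2⟩

lemma sum_margVY_apply (r : 𝒱 × 𝒳 × 𝒴 → ℝ) (v : 𝒱) : ∑ y, margVY r (v, y) = margV3 r v :=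
  Finset.sum_comm

lemma MarkovXVY.apply_eq_mul_div (hr : ∀ z, 0 ≤ r z) (h : MarkovXVY r) (v : 𝒱) (x : 𝒳) (y : 𝒴) :
    r (v, x, y) = margVX r (v, x) * margVY r (v, y) / margV3 r v := by
  -- If `margV3 r v = 0`, the whole fibre over `v` vanishes, matching the junk value `x / 0 = 0`.
  have hV : 0 ≤ margV3 r v := Finset.sum_nonneg fun x _ => Finset.sum_nonneg fun y _ => hr _
  rcases hV.eq_or_lt with h0 | h0
  · have hle : r (v, x, y) ≤ margV3 r v :=
      (Finset.single_le_sum (f := fun y => r (v, x, y)) (fun y _ => hr _) (Finset.mem_univ y)).trans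
        (Finset.single_le_sum (f := fun x => ∑ y, r (v, x, y))
          (fun x _ => Finset.sum_nonneg fun y _ => hr _) (Finset.mem_univ x))
    rw [← h0, div_zero]
    exact le_antisymm (h0 ▸ hle) (hr _)
  · rw [eq_div_iff h0.ne', h v x y]

theorem sum_abs_sub_le_of_markovXVY {p q : 𝒱 × 𝒳 × 𝒴 → ℝ} (hp : ∀ z, 0 ≤ p z)
    (hq : ∀ z, 0 ≤ q z) (hpM : MarkovXVY p) (hqM : MarkovXVY q) :
    ∑ z, |p z - q z| ≤ ∑ vx, |margVX p vx - margVX q vx| + ∑ v, |margV3 p v - margV3 q v|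
      + ∑ vy, |margVY p vy - margVY q vy| := by
  simp only [Fintype.sum_prod_type, ← Finset.sum_add_distrib]
  refine Finset.sum_le_sum fun v _ => ?_
  simp only [hpM.apply_eq_mul_div hp, hqM.apply_eq_mul_div hq]
  exact sum_sum_abs_mul_div_sub_mul_div_le _ _ _ _
    (fun y => Finset.sum_nonneg fun x _ => hp _) (fun x => Finset.sum_nonneg fun y _ => hq _)
    (sum_margVY_apply p v) rfl

end Marginals

lemma IsPMF.le_half_of_forall_le {β : Type*} [Fintype β] [Nontrivial β] {q : β → ℝ} {μ : ℝ}
    (hq : IsPMF q) (hμ : ∀ z, μ ≤ q z) : μ ≤ 1 / 2 := by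
  obtain ⟨z, z', hne⟩ := exists_pair_ne β
  have h : q z + q z' ≤ 1 :=
    hq.2 ▸ Finset.sum_pair (f := q) hne ▸ Finset.sum_le_univ_sum_of_nonneg hq.1
  linarith [hμ z, hμ z']

lemma IsPMF.eq_of_subsingleton {β : Type*} [Fintype β] [Subsingleton β] {p q : β → ℝ}
    (hp : IsPMF p) (hq : IsPMF q) : p = q := by
  funext z
  rw [← Fintype.sum_subsingleton p z, ← Fintype.sum_subsingleton q z, hp.2, hq.2]

lemma klDiv_self {β : Type*} [Fintype β] (p : β → ℝ) : klDiv p p = 0 := by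
  rw [klDiv, if_pos fun _ => id, Finset.sum_eq_zero fun z _ => ?_, ENNReal.ofReal_zero]
  rcases eq_or_ne (p z) 0 with h | h <;> simp [h]

/-- Abstract single-letter form of the first chain of inequalities, Eq. (2), in
the proof of Lemma 9: for pmfs `p, q` on `𝒱 × 𝒳 × 𝒴` with `q > 0`, both
satisfying the Markov chain `X − V − Y`,
`D(p‖q) ≤ log₂(1/μ_q)·√(2 ln 2)·[√(D(q_{VX}‖p_{VX})) + √(D(q_V‖p_V)) + √(D(q_{VY}‖p_{VY}))]`. -/
theorem klDiv_markov_decomposition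
    {𝒱 𝒳 𝒴 : Type*} [Fintype 𝒱] [Fintype 𝒳] [Fintype 𝒴]
    [Nonempty 𝒱] [Nonempty 𝒳] [Nonempty 𝒴]
    (p q : 𝒱 × 𝒳 × 𝒴 → ℝ) (hp : IsPMF p) (hq : IsPMF q)
    (hqpos : ∀ z, 0 < q z) (hpM : MarkovXVY p) (hqM : MarkovXVY q) :
    klDiv p q ≤
      ENNReal.ofReal
          (Real.logb 2 ((Finset.univ.inf' Finset.univ_nonempty q)⁻¹) *
            Real.sqrt (2 * Real.log 2)) *
        ((klDiv (margVX q) (margVX p)) ^ (1 / 2 : ℝ) +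
          (klDiv (margV3 q) (margV3 p)) ^ (1 / 2 : ℝ) +
          (klDiv (margVY q) (margVY p)) ^ (1 / 2 : ℝ)) := by
  -- Off a one-point space, `μ ≤ 1 / 2`.
  rcases subsingleton_or_nontrivial (𝒱 × 𝒳 × 𝒴) with _ | _
  · rw [hp.eq_of_subsingleton hq, klDiv_self]
    exact zero_le
  set μ := Finset.univ.inf' Finset.univ_nonempty q
  have hμq : ∀ z, μ ≤ q z := fun z => Finset.inf'_le q (Finset.mem_univ z)
  have hμ : 0 < μ := (Finset.lt_inf'_iff _).2 fun z _ => hqpos z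
  have hμ2 := hq.le_half_of_forall_le hμq
  have hC : 0 ≤ logb 2 μ⁻¹ := logb_nonneg one_lt_two ((one_le_inv₀ hμ).2 (by linarith))
  calc klDiv p q ≤ ENNReal.ofReal (logb 2 μ⁻¹ * ∑ z, |q z - p z|) := by
        simpa only [abs_sub_comm (p _)] using
          klDiv_le_logb_inv_mul_sum_abs_sub hp hq hμ hμ2 hμq
    _ ≤ ENNReal.ofReal (logb 2 μ⁻¹) * ENNReal.ofReal (∑ vx, |margVX q vx - margVX p vx|
          + ∑ v, |margV3 q v - margV3 p v| + ∑ vy, |margVY q vy - margVY p vy|) := by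
        rw [← ENNReal.ofReal_mul hC]
        gcongr
        exact sum_abs_sub_le_of_markovXVY hq.1 hp.1 hqM hpM
    _ ≤ ENNReal.ofReal (logb 2 μ⁻¹) *
          (ENNReal.ofReal √(2 * log 2) * klDiv (margVX q) (margVX p) ^ (1 / 2 : ℝ)
            + ENNReal.ofReal √(2 * log 2) * klDiv (margV3 q) (margV3 p) ^ (1 / 2 : ℝ)
            + ENNReal.ofReal √(2 * log 2) * klDiv (margVY q) (margVY p) ^ (1 / 2 : ℝ)) := by
        grw [ENNReal.ofReal_add_le, ENNReal.ofReal_add_le,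
          ofReal_sum_abs_sub_le_klDiv (isPMF_margVX hq) (isPMF_margVX hp),
          ofReal_sum_abs_sub_le_klDiv (isPMF_margV3 hq) (isPMF_margV3 hp),
          ofReal_sum_abs_sub_le_klDiv (isPMF_margVY hq) (isPMF_margVY hp)]
    _ = _ := by rw [ENNReal.ofReal_mul hC]; ring
end

section
/- Let 𝒱 and 𝒳 be finite nonempty sets, N ≥ 1, and let q be a joint pmf of (U^{1:N}, X) on 𝒱^N × 𝒳. Let δ > 0 and let F₁, S ⊆ {1, …, N} be disjoint sets such that H(U^j | U^{1:j−1}) ≤ δ for every j ∈ F₁ and H(U^j | U^{1:j−1} X) > log₂|𝒱| − δ for every j ∈ S (conditional entropies under q). Define the joint pmf p̃ on 𝒱^N × 𝒳 by p̃(u^{1:N}, x) = q_X(x) · ∏_{j∈F₁} q_{U^j|U^{1:j−1}}(u^j | u^{1:j−1}) · ∏_{j∈S} |𝒱|^{−1} · ∏_{j∉F₁∪S} q_{U^j|U^{1:j−1}X}(u^j | u^{1:j−1}, x). Then the variational distance satisfies V(q, p̃) ≤ √(2 ln 2) · √(N δ). (Lemma 6 of Section V of the paper (Lemma lemstrongcoord),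 obtained from the divergence bound via Pinsker's inequality.) -/
open scoped ENNReal BigOperators

attribute [local instance] Classical.propDecidable

/-- Variational distance between two pmfs. -/
noncomputable def varDist {α : Type*} [Fintype α] (p q : α → ℝ) : ℝ :=
  ∑ x, |p x - q x|

/-- `𝒳`-marginal of a joint pmf `q` of `(U^{1:N}, X)`. -/
noncomputable def margX {𝒱 𝒳 : Type*} [Fintype 𝒱] [Fintype 𝒳] {N : ℕ}
    (q : (Fin N → 𝒱) × 𝒳 → ℝ) (x : 𝒳) : ℝ :=
  ∑ u, q (u, x)

/-- Probability, under `q`, that the `U`-coordinates strictly before `j`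
agree with `u` (marginally over `X`). -/
noncomputable def prefLTU {𝒱 𝒳 : Type*} [Fintype 𝒱] [Fintype 𝒳] [DecidableEq 𝒱] {N : ℕ}
    (q : (Fin N → 𝒱) × 𝒳 → ℝ) (j : Fin N) (u : Fin N → 𝒱) : ℝ :=
  ∑ z : (Fin N → 𝒱) × 𝒳, if ∀ l, l < j → z.1 l = u l then q z else 0

/-- Probability, under `q`, that the `U`-coordinates up to and including `j`
agree with `u` (marginally over `X`). -/
noncomputable def prefLEU {𝒱 𝒳 : Type*} [Fintype 𝒱] [Fintype 𝒳] [DecidableEq 𝒱] {N : ℕ}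
    (q : (Fin N → 𝒱) × 𝒳 → ℝ) (j : Fin N) (u : Fin N → 𝒱) : ℝ :=
  ∑ z : (Fin N → 𝒱) × 𝒳, if ∀ l, l ≤ j → z.1 l = u l then q z else 0

/-- Conditional probability `q_{U^j|U^{1:j−1}}(u^j|u^{1:j−1})`, with the uniform
distribution chosen for conditioning values of probability zero. -/
noncomputable def condProbU {𝒱 𝒳 : Type*} [Fintype 𝒱] [Fintype 𝒳] [DecidableEq 𝒱] {N : ℕ}
    (q : (Fin N → 𝒱) × 𝒳 → ℝ) (j : Fin N) (u : Fin N → 𝒱) : ℝ :=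
  if prefLTU q j u = 0 then (Fintype.card 𝒱 : ℝ)⁻¹ else prefLEU q j u / prefLTU q j u

/-- Probability, under `q`, that the `U`-coordinates strictly before `j` agree
with `u` and the `X`-coordinate equals `x`. -/
noncomputable def prefLTUX {𝒱 𝒳 : Type*} [Fintype 𝒱] [Fintype 𝒳] [DecidableEq 𝒱] [DecidableEq 𝒳] {N : ℕ}
    (q : (Fin N → 𝒱) × 𝒳 → ℝ) (j : Fin N) (u : Fin N → 𝒱) (x : 𝒳) : ℝ :=
  ∑ z : (Fin N → 𝒱) × 𝒳, if (∀ l, l < j → z.1 l = u l) ∧ z.2 = x then q z else 0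

/-- Probability, under `q`, that the `U`-coordinates up to and including `j`
agree with `u` and the `X`-coordinate equals `x`. -/
noncomputable def prefLEUX {𝒱 𝒳 : Type*} [Fintype 𝒱] [Fintype 𝒳] [DecidableEq 𝒱] [DecidableEq 𝒳] {N : ℕ}
    (q : (Fin N → 𝒱) × 𝒳 → ℝ) (j : Fin N) (u : Fin N → 𝒱) (x : 𝒳) : ℝ :=
  ∑ z : (Fin N → 𝒱) × 𝒳, if (∀ l, l ≤ j → z.1 l = u l) ∧ z.2 = x then q z else 0

/-- Conditional probability `q_{U^j|U^{1:j−1} X}(u^j|u^{1:j−1}, x)`, with the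
uniform distribution chosen for conditioning values of probability zero. -/
noncomputable def condProbUX {𝒱 𝒳 : Type*} [Fintype 𝒱] [Fintype 𝒳] [DecidableEq 𝒱] [DecidableEq 𝒳] {N : ℕ}
    (q : (Fin N → 𝒱) × 𝒳 → ℝ) (j : Fin N) (u : Fin N → 𝒱) (x : 𝒳) : ℝ :=
  if prefLTUX q j u x = 0 then (Fintype.card 𝒱 : ℝ)⁻¹
  else prefLEUX q j u x / prefLTUX q j u x

/-- Conditional Shannon entropy `H(U^j | U^{1:j−1})` under `q`. -/
noncomputable def condEntU {𝒱 𝒳 : Type*} [Fintype 𝒱] [Fintype 𝒳] [DecidableEq 𝒱] {N : ℕ}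
    (q : (Fin N → 𝒱) × 𝒳 → ℝ) (j : Fin N) : ℝ :=
  -∑ z : (Fin N → 𝒱) × 𝒳, q z * Real.logb 2 (condProbU q j z.1)

/-- Conditional Shannon entropy `H(U^j | U^{1:j−1} X)` under `q`. -/
noncomputable def condEntUX {𝒱 𝒳 : Type*} [Fintype 𝒱] [Fintype 𝒳] [DecidableEq 𝒱] [DecidableEq 𝒳] {N : ℕ}
    (q : (Fin N → 𝒱) × 𝒳 → ℝ) (j : Fin N) : ℝ :=
  -∑ z : (Fin N → 𝒱) × 𝒳, q z * Real.logb 2 (condProbUX q j z.1 z.2)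

/-- The polar-encoder joint pmf `p̃(u^{1:N}, x)` for conditional resolvability:
`X` keeps its marginal; positions in `F₁` are drawn from the conditionals given
the past `U`'s only, positions in `S` are uniform, and the remaining positions
are drawn from the conditionals given the past `U`'s and `X`. -/
noncomputable def ptilde {𝒱 𝒳 : Type*} [Fintype 𝒱] [Fintype 𝒳] [DecidableEq 𝒱] [DecidableEq 𝒳] {N : ℕ}
    (q : (Fin N → 𝒱) × 𝒳 → ℝ) (F₁ S : Finset (Fin N)) : (Fin N → 𝒱) × 𝒳 → ℝ :=
  fun z => margX q z.2 * ∏ j : Fin N,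
    (if j ∈ F₁ then condProbU q j z.1
     else if j ∈ S then (Fintype.card 𝒱 : ℝ)⁻¹
     else condProbUX q j z.1 z.2)


/-! By the chain rule, `q(u, x) = q_X(x) ∏ⱼ q(uʲ | u^{1:j-1}, x)`, while `p̃` replaces the `j`-th
factor by `q(uʲ | u^{1:j-1})` on `F₁` and by `|𝒱|⁻¹` on `S`. So `D(q‖p̃)` is a sum over positions
of `H(Uʲ | U^{1:j-1}) - H(Uʲ | U^{1:j-1} X)`, `log |𝒱| - H(Uʲ | U^{1:j-1} X)` or `0`, each at most
`δ` by hypothesis (and `H ≥ 0`); thus `D(q‖p̃) ≤ N δ`, and Pinsker's inequality `V² ≤ 2 ln 2 · D`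
concludes. Pinsker itself follows from `3 (t - 1)² ≤ 2 (t + 2) (t log t - t + 1)` and
Cauchy–Schwarz. -/

open Finset Real
open InformationTheory (klFun klFun_one klFun_nonneg hasDerivAt_klFun continuous_klFun)

section Pinsker

lemma monotoneOn_add_one_mul_log_sub :
    MonotoneOn (fun t => (t + 1) * log t - 2 * (t - 1)) (Set.Ioi 0) := by
  have hderiv (t : ℝ) (ht : 0 < t) :
      HasDerivAt (fun t => (t + 1) * log t - 2 * (t - 1)) (log t + t⁻¹ - 1) t := by
    refine ((((hasDerivAt_id' t).add_const 1).fun_mul (hasDerivAt_log ht.ne')).fun_sub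
      (((hasDerivAt_id' t).sub_const 1).const_mul 2)).congr_deriv ?_
    field_simp
    ring
  refine monotoneOn_of_hasDerivWithinAt_nonneg (f' := fun t => log t + t⁻¹ - 1) (convex_Ioi 0)
    (fun t ht => (hderiv t ht).continuousAt.continuousWithinAt) ?_ ?_ <;> rw [interior_Ioi]
  · exact fun t ht => (hderiv t ht).hasDerivWithinAt
  · exact fun t ht => by linarith [one_sub_inv_le_log_of_pos (Set.mem_Ioi.mp ht)]

lemma two_mul_sub_one_le_add_one_mul_log {t : ℝ} (ht : 1 ≤ t) :
    2 * (t - 1) ≤ (t + 1) * log t := by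
  have := monotoneOn_add_one_mul_log_sub (Set.mem_Ioi.2 one_pos) (Set.mem_Ioi.2 (by linarith)) ht
  norm_num at this
  linarith

lemma add_one_mul_log_le_two_mul_sub_one {t : ℝ} (h0 : 0 < t) (ht : t ≤ 1) :
    (t + 1) * log t ≤ 2 * (t - 1) := by
  have := monotoneOn_add_one_mul_log_sub (Set.mem_Ioi.2 h0) (Set.mem_Ioi.2 one_pos) ht
  norm_num at this
  linarith

lemma three_mul_sq_sub_one_le_klFun {t : ℝ} (ht : 0 ≤ t) :
    3 * (t - 1) ^ 2 ≤ 2 * (t + 2) * klFun t := by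
  set F : ℝ → ℝ := fun t => 2 * (t + 2) * klFun t - 3 * (t - 1) ^ 2
  set F' : ℝ → ℝ := fun s => 4 * ((s + 1) * log s - 2 * (s - 1))
  have hF : Continuous F := by fun_prop (disch := exact continuous_klFun)
  have hF' (s : ℝ) (hs : 0 < s) (D : Set ℝ) : HasDerivWithinAt F (F' s) D s := by
    refine ((((((hasDerivAt_id' s).add_const 2).const_mul 2).fun_mul
      (hasDerivAt_klFun hs.ne')).fun_sub ((((hasDerivAt_id' s).sub_const 1).fun_pow 2).const_mul
      3)).congr_deriv ?_).hasDerivWithinAt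
    simp only [F', klFun]
    ring
  have hF1 : F 1 = 0 := by simp [F, klFun_one]
  suffices 0 ≤ F t by simpa [F, sub_nonneg] using this
  rcases le_total 1 t with h1 | h1
  · refine hF1 ▸ monotoneOn_of_hasDerivWithinAt_nonneg (f' := F') (convex_Ici 1) hF.continuousOn
      (fun s hs => ?_) (fun s hs => ?_) Set.self_mem_Ici h1 h1 <;> rw [interior_Ici] at hs
    · exact hF' s (one_pos.trans hs) _
    · linarith [two_mul_sub_one_le_add_one_mul_log hs.out.le]
  · refine hF1 ▸ antitoneOn_of_hasDerivWithinAt_nonpos (f' := F') (convex_Icc 0 1)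
      hF.continuousOn (fun s hs => ?_) (fun s hs => ?_) ⟨ht, h1⟩
      (Set.right_mem_Icc.2 zero_le_one) h1 <;> rw [interior_Icc] at hs
    · exact hF' s hs.1 _
    · linarith [add_one_mul_log_le_two_mul_sub_one hs.1 hs.2.le]

lemma sq_sub_le_mul_klFun_div {p q : ℝ} (hp : 0 ≤ p) (hq : 0 ≤ q) (hpq : q = 0 → p = 0) :
    (p - q) ^ 2 ≤ 2 * (q * klFun (p / q)) * ((p + 2 * q) / 3) := by
  rcases hq.eq_or_lt with rfl | hq
  · simp [hpq rfl]
  have hkey := three_mul_sq_sub_one_le_klFun (div_nonneg hp hq.le)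
  have hp : p = p / q * q := (div_mul_cancel₀ p hq.ne').symm
  calc (p - q) ^ 2 = q ^ 2 / 3 * (3 * (p / q - 1) ^ 2) := by rw [hp]; field_simp
    _ ≤ q ^ 2 / 3 * (2 * (p / q + 2) * klFun (p / q)) := by gcongr
    _ = 2 * (q * klFun (p / q)) * ((p + 2 * q) / 3) := by rw [hp]; field_simp

lemma mul_klFun_div {p q : ℝ} (hpq : q = 0 → p = 0) :
    q * klFun (p / q) = p * log (p / q) + q - p := by
  rcases eq_or_ne q 0 with rfl | hq
  · simp [hpq rfl]
  · rw [klFun]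
    field_simp

variable {α : Type*} [Fintype α] {p q : α → ℝ}

theorem sq_varDist_le_two_mul_sum_mul_log (hp : IsPMF p) (hq : IsPMF q)
    (hpq : ∀ x, q x = 0 → p x = 0) :
    varDist p q ^ 2 ≤ 2 * ∑ x, p x * log (p x / q x) := by
  calc varDist p q ^ 2 = (∑ x, |p x - q x|) ^ 2 := rfl
    _ ≤ (∑ x, 2 * (q x * klFun (p x / q x))) * ∑ x, (p x + 2 * q x) / 3 :=
      sum_sq_le_sum_mul_sum_of_sq_le_mul _
        (fun x _ => mul_nonneg zero_le_two
          (mul_nonneg (hq.1 x) (klFun_nonneg (div_nonneg (hp.1 x) (hq.1 x)))))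
        (fun x _ => by linarith [hp.1 x, hq.1 x])
        (fun x _ => by rw [sq_abs]; exact sq_sub_le_mul_klFun_div (hp.1 x) (hq.1 x) (hpq x))
    _ = 2 * ∑ x, p x * log (p x / q x) := by
      simp only [mul_klFun_div (hpq _), ← mul_sum, ← sum_div, sum_add_distrib, sum_sub_distrib,
        hp.2, hq.2]
      ring

theorem varDist_le_sqrt_klDiv (hp : IsPMF p) (hq : IsPMF q) (hpq : ∀ x, q x = 0 → p x = 0) :
    varDist p q ≤ √(2 * log 2) * √(klDiv p q).toReal := by
  have hD : ∑ x, p x * log (p x / q x) ≤ log 2 * (klDiv p q).toReal := by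
    rw [klDiv, if_pos hpq, ENNReal.toReal_ofReal']
    calc ∑ x, p x * log (p x / q x) = log 2 * ∑ x, p x * logb 2 (p x / q x) := by
          simp only [mul_sum, logb, mul_div_assoc']
          field_simp
      _ ≤ _ := mul_le_mul_of_nonneg_left (le_max_left _ _) (log_pos one_lt_two).le
  calc varDist p q = √(varDist p q ^ 2) := (sqrt_sq (sum_nonneg fun x _ => abs_nonneg _)).symm
    _ ≤ √(2 * log 2 * (klDiv p q).toReal) := by
      gcongr
      linarith [sq_varDist_le_two_mul_sum_mul_log hp hq hpq]
    _ = √(2 * log 2) * √(klDiv p q).toReal := sqrt_mul (by positivity) _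

end Pinsker

theorem sum_prod_eq_one_of_causal {V : Type*} [Fintype V] [Nonempty V] :
    ∀ {n : ℕ} (g : Fin n → (Fin n → V) → ℝ),
      (∀ j u v, (∀ l ≤ j, u l = v l) → g j u = g j v) →
      (∀ j u, ∑ v, g j (Function.update u j v) = 1) → ∑ u, ∏ j, g j u = 1
  | 0, _, _, _ => by simp
  | n + 1, g, hcausal, hsum => by
    obtain ⟨v₀⟩ := ‹Nonempty V›
    have hsnoc (i : Fin n) (w w' : Fin n → V) (v v' : V) (h : ∀ l ≤ i, w l = w' l) :
        g i.castSucc (Fin.snoc w v) = g i.castSucc (Fin.snoc w' v') := by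
      refine hcausal _ _ _ fun l hl => ?_
      obtain ⟨l, rfl⟩ :=
        Fin.exists_castSucc_eq.2 (Fin.ne_last_of_lt (hl.trans_lt i.castSucc_lt_last))
      simpa using h l (Fin.castSucc_le_castSucc_iff.1 hl)
    have hlast (w : Fin n → V) : ∑ v, g (Fin.last n) (Fin.snoc w v) = 1 := by
      simpa [Fin.update_snoc_last] using hsum (Fin.last n) (Fin.snoc w v₀)
    have hinit := sum_prod_eq_one_of_causal (fun i w => g i.castSucc (Fin.snoc w v₀))
      (fun i w w' h => hsnoc i w w' v₀ v₀ h)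
      (fun i w => by simpa [Fin.snoc_update] using hsum i.castSucc (Fin.snoc w v₀))
    rw [← (Fin.snocEquiv fun _ => V).sum_comp, Fintype.sum_prod_type, sum_comm, ← hinit]
    refine sum_congr rfl fun w _ => ?_
    change ∑ v, ∏ j, g j (Fin.snoc w v) = _
    simp only [Fin.prod_univ_castSucc, hsnoc _ w w _ v₀ fun _ _ => rfl, ← mul_sum, hlast, mul_one]

section ConditionalProbability

variable {𝒱 𝒳 : Type*} [Fintype 𝒱] [Fintype 𝒳] {N : ℕ} (q : (Fin N → 𝒱) × 𝒳 → ℝ)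

lemma le_margX (hq : ∀ z, 0 ≤ q z) (z : (Fin N → 𝒱) × 𝒳) : q z ≤ margX q z.2 :=
  single_le_sum (fun u _ => hq (u, z.2)) (mem_univ z.1)

variable [DecidableEq 𝒱]

/-- Indexed by `ℕ` rather than `Fin N`, so that the chain rule can telescope from `0` to `N`. -/
noncomputable def prefixMass (k : ℕ) (u : Fin N → 𝒱) : ℝ :=
  ∑ z : (Fin N → 𝒱) × 𝒳, if ∀ l : Fin N, (l : ℕ) < k → z.1 l = u l then q z else 0

lemma prefLTU_eq_prefixMass (j : Fin N) (u : Fin N → 𝒱) :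
    prefLTU q j u = prefixMass q j u := by
  simp only [prefLTU, prefixMass, Fin.lt_def]

lemma prefLEU_eq_prefixMass (j : Fin N) (u : Fin N → 𝒱) :
    prefLEU q j u = prefixMass q (j + 1) u := by
  simp only [prefLEU, prefixMass, Fin.le_def, Nat.lt_succ_iff]

lemma prefixMass_zero (u : Fin N → 𝒱) : prefixMass q 0 u = ∑ z, q z := by
  simp [prefixMass]

lemma prefixMass_of_le {k : ℕ} (hk : N ≤ k) (u : Fin N → 𝒱) :
    prefixMass q k u = ∑ x, q (u, x) := by
  have (w : Fin N → 𝒱) : (∀ l : Fin N, (l : ℕ) < k → w l = u l) ↔ w = u :=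
    ⟨fun h => funext fun l => h l (l.isLt.trans_le hk), fun h _ _ => h ▸ rfl⟩
  simp only [prefixMass, Fintype.sum_prod_type, this]
  rw [Fintype.sum_eq_single u fun w hw => by simp [hw]]
  simp

lemma le_prefixMass (hq : ∀ z, 0 ≤ q z) (k : ℕ) (z : (Fin N → 𝒱) × 𝒳) :
    q z ≤ prefixMass q k z.1 := by
  simpa [prefixMass] using single_le_sum (fun w _ => ite_nonneg (hq w) le_rfl) (mem_univ z)
    (f := fun w => if ∀ l : Fin N, (l : ℕ) < k → w.1 l = z.1 l then q w else 0)

lemma prefixMass_nonneg (hq : ∀ z, 0 ≤ q z) (k : ℕ) (u : Fin N → 𝒱) :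
    0 ≤ prefixMass q k u :=
  sum_nonneg fun z _ => ite_nonneg (hq z) le_rfl

lemma prefixMass_congr {k : ℕ} {u v : Fin N → 𝒱} (h : ∀ l : Fin N, (l : ℕ) < k → u l = v l) :
    prefixMass q k u = prefixMass q k v := by
  refine sum_congr rfl fun z _ => if_congr ?_ rfl rfl
  exact forall₂_congr fun l hl => by rw [h l hl]

lemma sum_prefixMass_update (j : Fin N) (u : Fin N → 𝒱) :
    ∑ v, prefixMass q (j + 1) (Function.update u j v) = prefixMass q j u := by
  have (w : Fin N → 𝒱) (v : 𝒱) :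
      (∀ l : Fin N, (l : ℕ) < j + 1 → w l = Function.update u j v l) ↔
        (∀ l : Fin N, (l : ℕ) < j → w l = u l) ∧ w j = v := by
    refine ⟨fun h => ⟨fun l hl => ?_, by simpa using h j (Nat.lt_succ_self _)⟩, ?_⟩
    · simpa [Function.update_of_ne (Fin.ne_of_lt hl)] using h l (Nat.lt_succ_of_lt hl)
    · rintro ⟨h, rfl⟩ l hl
      rcases (Nat.lt_succ_iff_lt_or_eq.mp hl) with hl | hl
      · simpa [Function.update_of_ne (Fin.ne_of_lt hl)] using h l hl
      · simp [Fin.ext hl]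
  simp only [prefixMass, this, ite_and]
  rw [sum_comm]
  refine sum_congr rfl fun z _ => ?_
  split_ifs <;> simp

lemma condProbU_eq (j : Fin N) (u : Fin N → 𝒱) :
    condProbU q j u = if prefixMass q j u = 0 then (Fintype.card 𝒱 : ℝ)⁻¹
      else prefixMass q (j + 1) u / prefixMass q j u := by
  rw [condProbU, prefLTU_eq_prefixMass, prefLEU_eq_prefixMass]

lemma condProbU_congr {j : Fin N} {u v : Fin N → 𝒱} (h : ∀ l ≤ j, u l = v l) :
    condProbU q j u = condProbU q j v := by
  have hlt : ∀ l : Fin N, (l : ℕ) < j → u l = v l := fun l hl => h l (Fin.le_of_lt hl)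
  have hle : ∀ l : Fin N, (l : ℕ) < j + 1 → u l = v l :=
    fun l hl => h l (Fin.le_def.2 (Nat.lt_succ_iff.1 hl))
  rw [condProbU_eq, condProbU_eq, prefixMass_congr q hlt, prefixMass_congr q hle]

lemma sum_mul_prod_condProbU (hq : ∀ z, 0 ≤ q z) {z : (Fin N → 𝒱) × 𝒳} (hz : 0 < q z) :
    (∑ w, q w) * ∏ j, condProbU q j z.1 = ∑ x, q (z.1, x) := by
  set m := fun k => prefixMass q k z.1
  have hpos (k : ℕ) : m k ≠ 0 := (hz.trans_le (le_prefixMass q hq k z)).ne'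
  have hcond (j : Fin N) : condProbU q j z.1 = m (j + 1) / m j := by
    rw [condProbU_eq, if_neg (hpos j)]
  rw [← prefixMass_zero q z.1, ← prefixMass_of_le q le_rfl, prod_congr rfl fun j _ => hcond j,
    Fin.prod_univ_eq_prod_range (fun k => m (k + 1) / m k),
    prod_range_induction _ (fun k => m k / m 0) (div_self (hpos 0)) N fun k _ => by
      field_simp [hpos k, hpos 0]]
  exact mul_div_cancel₀ _ (hpos 0)

variable [Nonempty 𝒱]

lemma condProbU_nonneg (hq : ∀ z, 0 ≤ q z) (j : Fin N) (u : Fin N → 𝒱) :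
    0 ≤ condProbU q j u := by
  rw [condProbU_eq]
  split_ifs
  · positivity
  · exact div_nonneg (prefixMass_nonneg q hq _ u) (prefixMass_nonneg q hq _ u)

lemma condProbU_pos (hq : ∀ z, 0 ≤ q z) (j : Fin N) {z : (Fin N → 𝒱) × 𝒳} (hz : 0 < q z) :
    0 < condProbU q j z.1 := by
  rw [condProbU_eq]
  split_ifs with h
  · positivity
  · exact div_pos (hz.trans_le (le_prefixMass q hq _ z))
      ((prefixMass_nonneg q hq _ _).lt_of_ne' h)

lemma sum_condProbU_update (j : Fin N) (u : Fin N → 𝒱) :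
    ∑ v, condProbU q j (Function.update u j v) = 1 := by
  have hpast (v : 𝒱) : prefixMass q j (Function.update u j v) = prefixMass q j u :=
    prefixMass_congr q fun l hl => Function.update_of_ne (Fin.ne_of_lt hl) _ _
  simp only [condProbU_eq, hpast]
  split_ifs with h
  · simp
  · rw [← sum_div, sum_prefixMass_update, div_self h]

lemma condProbU_le_one (hq : ∀ z, 0 ≤ q z) (j : Fin N) (u : Fin N → 𝒱) :
    condProbU q j u ≤ 1 := by
  simpa [← sum_condProbU_update q j u] using single_le_sum
    (fun v _ => condProbU_nonneg q hq j (Function.update u j v)) (mem_univ (u j))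

end ConditionalProbability

section ConditioningOnX

variable {𝒱 𝒳 : Type*} [DecidableEq 𝒳] {N : ℕ} (q : (Fin N → 𝒱) × 𝒳 → ℝ)

/-- `q` restricted to `X = x`; conditioning on `(U^{1:j-1}, X)` under `q` is conditioning on
`U^{1:j-1}` under this restriction. -/
noncomputable def restrictX (x : 𝒳) : (Fin N → 𝒱) × 𝒳 → ℝ := fun z => if z.2 = x then q z else 0

lemma restrictX_nonneg (hq : ∀ z, 0 ≤ q z) (x : 𝒳) (z : (Fin N → 𝒱) × 𝒳) :
    0 ≤ restrictX q x z :=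
  ite_nonneg (hq z) le_rfl

variable [Fintype 𝒱] [Fintype 𝒳] [DecidableEq 𝒱]

lemma condProbUX_eq_condProbU_restrictX (j : Fin N) (u : Fin N → 𝒱) (x : 𝒳) :
    condProbUX q j u x = condProbU (restrictX q x) j u := by
  have hLT : prefLTUX q j u x = prefLTU (restrictX q x) j u :=
    sum_congr rfl fun z _ => by simp only [restrictX]; split_ifs <;> tauto
  have hLE : prefLEUX q j u x = prefLEU (restrictX q x) j u :=
    sum_congr rfl fun z _ => by simp only [restrictX]; split_ifs <;> tauto
  rw [condProbUX, condProbU, hLT, hLE]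

lemma condProbUX_congr {j : Fin N} {u v : Fin N → 𝒱} (x : 𝒳) (h : ∀ l ≤ j, u l = v l) :
    condProbUX q j u x = condProbUX q j v x := by
  simp only [condProbUX_eq_condProbU_restrictX, condProbU_congr _ h]

lemma margX_mul_prod_condProbUX (hq : ∀ z, 0 ≤ q z) {z : (Fin N → 𝒱) × 𝒳} (hz : 0 < q z) :
    margX q z.2 * ∏ j, condProbUX q j z.1 z.2 = q z := by
  simp only [condProbUX_eq_condProbU_restrictX]
  convert sum_mul_prod_condProbU _ (restrictX_nonneg q hq z.2) (z := z)
    (by simpa [restrictX] using hz) using 1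
  · simp [margX, restrictX, Fintype.sum_prod_type]
  · simp [restrictX]

variable [Nonempty 𝒱]

lemma condProbUX_nonneg (hq : ∀ z, 0 ≤ q z) (j : Fin N) (u : Fin N → 𝒱) (x : 𝒳) :
    0 ≤ condProbUX q j u x := by
  rw [condProbUX_eq_condProbU_restrictX]
  exact condProbU_nonneg _ (restrictX_nonneg q hq x) j u

lemma condProbUX_pos (hq : ∀ z, 0 ≤ q z) (j : Fin N) {z : (Fin N → 𝒱) × 𝒳} (hz : 0 < q z) :
    0 < condProbUX q j z.1 z.2 := by
  rw [condProbUX_eq_condProbU_restrictX]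
  exact condProbU_pos _ (restrictX_nonneg q hq z.2) j (by simpa [restrictX] using hz)

lemma condProbUX_le_one (hq : ∀ z, 0 ≤ q z) (j : Fin N) (u : Fin N → 𝒱) (x : 𝒳) :
    condProbUX q j u x ≤ 1 := by
  rw [condProbUX_eq_condProbU_restrictX]
  exact condProbU_le_one _ (restrictX_nonneg q hq x) j u

lemma sum_condProbUX_update (j : Fin N) (u : Fin N → 𝒱) (x : 𝒳) :
    ∑ v, condProbUX q j (Function.update u j v) x = 1 := by
  simp only [condProbUX_eq_condProbU_restrictX, sum_condProbU_update]

lemma condEntUX_nonneg (hq : ∀ z, 0 ≤ q z) (j : Fin N) : 0 ≤ condEntUX q j := by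
  refine neg_nonneg.2 (sum_nonpos fun z _ => mul_nonpos_of_nonneg_of_nonpos (hq z) ?_)
  exact logb_nonpos one_lt_two (condProbUX_nonneg q hq j _ _) (condProbUX_le_one q hq j _ _)

end ConditioningOnX

section Encoder

variable {𝒱 𝒳 : Type*} [Fintype 𝒱] [Fintype 𝒳] [DecidableEq 𝒱] [DecidableEq 𝒳]
  {N : ℕ} (q : (Fin N → 𝒱) × 𝒳 → ℝ) (F₁ S : Finset (Fin N))

noncomputable def encoderFactor (j : Fin N) (z : (Fin N → 𝒱) × 𝒳) : ℝ :=
  if j ∈ F₁ then condProbU q j z.1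
  else if j ∈ S then (Fintype.card 𝒱 : ℝ)⁻¹
  else condProbUX q j z.1 z.2

lemma ptilde_eq_margX_mul_prod (z : (Fin N → 𝒱) × 𝒳) :
    ptilde q F₁ S z = margX q z.2 * ∏ j, encoderFactor q F₁ S j z := rfl

lemma neg_sum_mul_logb_encoderFactor (hq : IsPMF q) (j : Fin N) :
    -∑ z, q z * logb 2 (encoderFactor q F₁ S j z) =
      if j ∈ F₁ then condEntU q j
      else if j ∈ S then logb 2 (Fintype.card 𝒱)
      else condEntUX q j := by
  unfold encoderFactor
  split_ifs
  · rfl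
  · rw [← sum_mul, hq.2, one_mul, logb_inv, neg_neg]
  · rfl

variable [Nonempty 𝒱]

lemma encoderFactor_nonneg (hq : ∀ z, 0 ≤ q z) (j : Fin N) (z : (Fin N → 𝒱) × 𝒳) :
    0 ≤ encoderFactor q F₁ S j z := by
  unfold encoderFactor
  split_ifs
  · exact condProbU_nonneg q hq j z.1
  · positivity
  · exact condProbUX_nonneg q hq j z.1 z.2

lemma encoderFactor_pos (hq : ∀ z, 0 ≤ q z) (j : Fin N) {z : (Fin N → 𝒱) × 𝒳} (hz : 0 < q z) :
    0 < encoderFactor q F₁ S j z := by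
  unfold encoderFactor
  split_ifs
  · exact condProbU_pos q hq j hz
  · positivity
  · exact condProbUX_pos q hq j hz

lemma sum_prod_encoderFactor (x : 𝒳) : ∑ u, ∏ j, encoderFactor q F₁ S j (u, x) = 1 := by
  refine sum_prod_eq_one_of_causal _ (fun j u v h => ?_) (fun j u => ?_) <;>
    unfold encoderFactor <;> split_ifs
  · exact condProbU_congr q h
  · rfl
  · exact condProbUX_congr q x h
  · exact sum_condProbU_update q j u
  · simp
  · exact sum_condProbUX_update q j u x

lemma isPMF_ptilde (hq : IsPMF q) : IsPMF (ptilde q F₁ S) := by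
  refine ⟨fun z => ?_, ?_⟩
  · exact mul_nonneg (sum_nonneg fun u _ => hq.1 (u, z.2))
      (prod_nonneg fun j _ => encoderFactor_nonneg q F₁ S hq.1 j z)
  · simp only [ptilde_eq_margX_mul_prod, Fintype.sum_prod_type_right, ← mul_sum,
      sum_prod_encoderFactor, mul_one, margX]
    rw [← Fintype.sum_prod_type_right, hq.2]

lemma ptilde_pos (hq : ∀ z, 0 ≤ q z) {z : (Fin N → 𝒱) × 𝒳} (hz : 0 < q z) :
    0 < ptilde q F₁ S z :=
  mul_pos (hz.trans_le (le_margX q hq z)) (prod_pos fun j _ => encoderFactor_pos q F₁ S hq j hz)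

lemma eq_zero_of_ptilde_eq_zero (hq : ∀ z, 0 ≤ q z) {z : (Fin N → 𝒱) × 𝒳}
    (h : ptilde q F₁ S z = 0) : q z = 0 :=
  by_contra fun hz => (ptilde_pos q F₁ S hq ((hq z).lt_of_ne' hz)).ne' h

lemma sum_mul_logb_div_ptilde (hq : ∀ z, 0 ≤ q z) :
    ∑ z, q z * logb 2 (q z / ptilde q F₁ S z) =
      ∑ j, (-∑ z, q z * logb 2 (encoderFactor q F₁ S j z) - condEntUX q j) := by
  have hsplit (z : (Fin N → 𝒱) × 𝒳) : q z * logb 2 (q z / ptilde q F₁ S z) =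
      ∑ j, (q z * logb 2 (condProbUX q j z.1 z.2) - q z * logb 2 (encoderFactor q F₁ S j z)) := by
    rcases (hq z).eq_or_lt with h | hz
    · simp [← h]
    have hcUX (j : Fin N) := condProbUX_pos q hq j hz
    have hfac (j : Fin N) := encoderFactor_pos q F₁ S hq j hz
    have hratio :
        q z / ptilde q F₁ S z = ∏ j, condProbUX q j z.1 z.2 / encoderFactor q F₁ S j z := by
      rw [prod_div_distrib, ptilde_eq_margX_mul_prod]
      nth_rw 1 [← margX_mul_prod_condProbUX q hq hz]
      exact mul_div_mul_left _ _ (hz.trans_le (le_margX q hq z)).ne'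
    rw [hratio, logb_prod _ _ fun j _ => (div_pos (hcUX j) (hfac j)).ne', mul_sum]
    exact sum_congr rfl fun j _ => by rw [logb_div (hcUX j).ne' (hfac j).ne', mul_sub]
  rw [sum_congr rfl fun z _ => hsplit z, sum_comm]
  refine sum_congr rfl fun j _ => ?_
  rw [sum_sub_distrib, condEntUX]
  ring

lemma klDiv_ptilde_toReal_le (hq : IsPMF q) {δ : ℝ} (hδ : 0 ≤ δ)
    (hF₁ : ∀ j ∈ F₁, condEntU q j ≤ δ)
    (hS : ∀ j ∈ S, logb 2 (Fintype.card 𝒱) - δ < condEntUX q j) :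
    (klDiv q (ptilde q F₁ S)).toReal ≤ N * δ := by
  have hterm (j : Fin N) : -∑ z, q z * logb 2 (encoderFactor q F₁ S j z) - condEntUX q j ≤ δ := by
    have := condEntUX_nonneg q hq.1 j
    rw [neg_sum_mul_logb_encoderFactor q F₁ S hq]
    split_ifs with hj hj'
    · linarith [hF₁ j hj]
    · linarith [hS j hj']
    · linarith
  rw [klDiv, if_pos fun z => eq_zero_of_ptilde_eq_zero q F₁ S hq.1, ENNReal.toReal_ofReal',
    sum_mul_logb_div_ptilde q F₁ S hq.1]
  refine max_le ((sum_le_sum fun j _ => hterm j).trans ?_) (by positivity)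
  simp

end Encoder

theorem varDist_cond_resolvability_encoder_general
    {𝒱 𝒳 : Type*} [Fintype 𝒱] [Fintype 𝒳] [DecidableEq 𝒱] [DecidableEq 𝒳]
    [Nonempty 𝒱] {N : ℕ}
    (q : (Fin N → 𝒱) × 𝒳 → ℝ) (hq : IsPMF q) (δ : ℝ) (hδ : 0 < δ)
    (F₁ S : Finset (Fin N))
    (hF₁ : ∀ j ∈ F₁, condEntU q j ≤ δ)
    (hS : ∀ j ∈ S, Real.logb 2 (Fintype.card 𝒱) - δ < condEntUX q j) :
    varDist q (ptilde q F₁ S) ≤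
      Real.sqrt (2 * Real.log 2) * Real.sqrt ((N : ℝ) * δ) := by
  calc varDist q (ptilde q F₁ S)
      ≤ √(2 * log 2) * √(klDiv q (ptilde q F₁ S)).toReal :=
        varDist_le_sqrt_klDiv hq (isPMF_ptilde q F₁ S hq)
          fun _ => eq_zero_of_ptilde_eq_zero q F₁ S hq.1
    _ ≤ √(2 * log 2) * √(N * δ) := by
        gcongr
        exact klDiv_ptilde_toReal_le q F₁ S hq hδ.le hF₁ hS

/-- Lemma 6 of Section V (lemstrongcoord): for the conditional-resolvability
polar encoder, the variational distance satisfies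
`V(q, p̃) ≤ √(2 ln 2) · √(N δ)`. -/
theorem varDist_cond_resolvability_encoder
    {𝒱 𝒳 : Type*} [Fintype 𝒱] [Fintype 𝒳] [DecidableEq 𝒱] [DecidableEq 𝒳]
    [Nonempty 𝒱] [Nonempty 𝒳] {N : ℕ} (hN : 1 ≤ N)
    (q : (Fin N → 𝒱) × 𝒳 → ℝ) (hq : IsPMF q) (δ : ℝ) (hδ : 0 < δ)
    (F₁ S : Finset (Fin N)) (hdisj : Disjoint F₁ S)
    (hF₁ : ∀ j ∈ F₁, condEntU q j ≤ δ)
    (hS : ∀ j ∈ S, Real.logb 2 (Fintype.card 𝒱) - δ < condEntUX q j) :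
    varDist q (ptilde q F₁ S) ≤
      Real.sqrt (2 * Real.log 2) * Real.sqrt ((N : ℝ) * δ) :=
  varDist_cond_resolvability_encoder_general q hq δ hδ F₁ S hF₁ hS
end
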